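/- arXiv:2205.10598 — 8 statements merged into one kernel-verified Lean document; each statement's English description precedes it below -/
import Mathlib

section
/- An even subdivision of the graph T (two disjoint odd cycles joined by a single edge, each edge subdivided an even number of times) has a unique perfect matching. -/
open SimpleGraph

variable {V : Type*}

/-- A graph has a perfect matching. -/
def HasPM (G : SimpleGraph V) : Prop := ∃ M : G.Subgraph, M.IsPerfectMatching

/-- A set of vertices is independent (pairwise nonadjacent). -/
def IsIndep (G : SimpleGraph V) (s : Set V) : Prop := ∀ x ∈ s, ∀ y ∈ s, ¬ G.Adj x y

/-- The independence number. -/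
noncomputable def alphaNum (G : SimpleGraph V) : ℕ :=
  sSup {n | ∃ s : Set V, IsIndep G s ∧ s.ncard = n}

/-- The matching number. -/
noncomputable def matchNum (G : SimpleGraph V) : ℕ :=
  sSup {n | ∃ M : G.Subgraph, M.IsMatching ∧ M.edgeSet.ncard = n}

/-- A graph is König-Egerváry if α + ν = n. -/
def IsKE (G : SimpleGraph V) : Prop := alphaNum G + matchNum G = Nat.card V

/-- `G` is (the whole graph) an even subdivision of `K₄`: four corner vertices and six
internally disjoint odd paths joining each pair of corners, comprising all vertices
and edges of `G`. -/
def IsEvenSubdivK4 (G : SimpleGraph V) : Prop :=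
  ∃ (c : Fin 4 → V) (P : ∀ i j : Fin 4, G.Walk (c i) (c j)),
    Function.Injective c ∧
    (∀ i j : Fin 4, P j i = (P i j).reverse) ∧
    (∀ i j : Fin 4, i ≠ j → (P i j).IsPath ∧ Odd (P i j).length) ∧
    (∀ i j k l : Fin 4, i ≠ j → k ≠ l → ¬(i = k ∧ j = l) → ¬(i = l ∧ j = k) →
      ∀ x : V, x ∈ (P i j).support → x ∈ (P k l).support → x ∈ Set.range c) ∧
    (∀ x : V, ∃ i j : Fin 4, i ≠ j ∧ x ∈ (P i j).support) ∧
    (∀ e : Sym2 V, e ∈ G.edgeSet ↔ ∃ i j : Fin 4, i ≠ j ∧ e ∈ (P i j).edges)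

/-- `G` is (the whole graph) an even subdivision of `T`: two vertex-disjoint odd cycles
joined at blossom tips `v`, `w` by an odd path internally disjoint from the cycles,
comprising all vertices and edges of `G`. -/
def IsEvenSubdivT (G : SimpleGraph V) : Prop :=
  ∃ (v w : V) (C1 : G.Walk v v) (C2 : G.Walk w w) (P : G.Walk v w),
    C1.IsCycle ∧ C2.IsCycle ∧ Odd C1.length ∧ Odd C2.length ∧
    P.IsPath ∧ Odd P.length ∧
    (∀ x : V, x ∈ C1.support → x ∉ C2.support) ∧
    (∀ x : V, x ∈ P.support → x ∈ C1.support → x = v) ∧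
    (∀ x : V, x ∈ P.support → x ∈ C2.support → x = w) ∧
    (∀ x : V, x ∈ C1.support ∨ x ∈ C2.support ∨ x ∈ P.support) ∧
    (∀ e : Sym2 V, e ∈ G.edgeSet ↔ e ∈ C1.edges ∨ e ∈ C2.edges ∨ e ∈ P.edges)

/-- `G` contains a nice even subdivision of `T`: a subgraph `H` which is an even
subdivision of `T` and such that `G - V(H)` has a perfect matching. -/
def HasNiceEvenSubdivT (G : SimpleGraph V) : Prop :=
  ∃ H : G.Subgraph, IsEvenSubdivT H.coe ∧ HasPM (G.induce (H.vertsᶜ))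

/-- `G` has a spanning subgraph whose components are independent edges together with a
positive number of vertex-disjoint odd cycles. -/
def HasOddCycleCover (G : SimpleGraph V) : Prop :=
  ∃ (M : G.Subgraph) (k : ℕ) (u : Fin k → V) (C : ∀ i : Fin k, G.Walk (u i) (u i)),
    0 < k ∧ M.IsMatching ∧
    (∀ i, (C i).IsCycle ∧ Odd (C i).length) ∧
    (∀ i j, i ≠ j → ∀ x : V, x ∈ (C i).support → x ∉ (C j).support) ∧
    (∀ i, ∀ x ∈ (C i).support, x ∉ M.verts) ∧
    (∀ x : V, x ∈ M.verts ∨ ∃ i, x ∈ (C i).support)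

/-- A matchable graph is Egerváry iff it has no such spanning cover. -/
def IsEgervary (G : SimpleGraph V) : Prop := ¬ HasOddCycleCover G

/-- `G` contains two vertex-disjoint odd cycles. -/
def TwoDisjointOddCycles (G : SimpleGraph V) : Prop :=
  ∃ (a b : V) (C1 : G.Walk a a) (C2 : G.Walk b b),
    C1.IsCycle ∧ C2.IsCycle ∧ Odd C1.length ∧ Odd C2.length ∧
    ∀ x : V, x ∈ C1.support → x ∉ C2.support

/-- `G` is α-critical: deleting any edge increases the independence number. -/
def AlphaCritical (G : SimpleGraph V) : Prop :=
  ∀ e ∈ G.edgeSet, alphaNum (G.deleteEdges {e}) = alphaNum G + 1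

/-- The (open) neighborhood of a set of vertices. -/
def setN (G : SimpleGraph V) (I : Set V) : Set V := {x | x ∉ I ∧ ∃ y ∈ I, G.Adj x y}

/-!
Unwinding each cycle at its tip, an even subdivision of `T` is an odd Hamiltonian path
`c₁ ⋯ v ⋯ w ⋯ c₂` (around `C₁`, along `P`, around `C₂`) together with the two chords `v c₁` and
`w c₂`, and every other edge of this path is a perfect matching. No perfect matching uses a
chord: the vertices of `C₁` other than `v` have all their neighbours on `C₁`, and `C₁` has an
odd number of vertices, so `v` is matched off `C₁`. A perfect matching inside a path is forced,
from one end, to be the alternating one.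
-/

namespace SimpleGraph

variable {G : SimpleGraph V}

namespace Subgraph

theorem IsMatching.even_card_of_forall_adj_mem {M : G.Subgraph} (hM : M.IsMatching)
    {s : Finset V} (hs : ∀ x ∈ s, x ∈ M.verts) (hcl : ∀ x ∈ s, ∀ y, M.Adj x y → y ∈ s) :
    Even s.card := by
  have hMs : (M.induce s).IsMatching := fun x hx => by
    obtain ⟨y, hy, hu⟩ := hM (hs x hx)
    exact ⟨y, ⟨hx, hcl x hx y hy, hy⟩, fun z hz => hu z hz.2.2⟩
  have : Fintype (M.induce s).verts := Fintype.ofFinset s fun _ => Iff.rfl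
  simpa using hMs.even_card

theorem IsPerfectMatching.eq_of_le {M M' : G.Subgraph} (hM : M.IsPerfectMatching)
    (hM' : M'.IsMatching) (h : M ≤ M') : M = M' := by
  refine le_antisymm h ⟨fun x _ => hM.2 x, fun x y hxy => ?_⟩
  obtain ⟨z, hz, -⟩ := hM.1 (hM.2 x)
  exact hM'.eq_of_adj_left (h.2 hz) hxy ▸ hz

end Subgraph

namespace Walk

variable {u v w : V}

theorem IsPath.append {p : G.Walk u v} {q : G.Walk v w} (hp : p.IsPath) (hq : q.IsPath)
    (h : ∀ x ∈ p.support, x ∈ q.support → x = v) : (p.append q).IsPath := by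
  have hq' := hq.support_nodup
  rw [← cons_tail_support q, List.nodup_cons] at hq'
  rw [isPath_def, support_append, List.nodup_append]
  refine ⟨hp.support_nodup, hq'.2, fun x hx y hy hxy => hq'.1 ?_⟩
  subst hxy
  exact h x hx (List.mem_of_mem_tail hy) ▸ hy

theorem IsPath.eq_of_mem_edges_cons {h : G.Adj u v} {p : G.Walk v w} (hp : (cons h p).IsPath)
    {y : V} (hy : s(u, y) ∈ (cons h p).edges) : y = v := by
  rw [edges_cons, List.mem_cons] at hy
  rcases hy with hy | hy
  · exact Sym2.congr_right.mp hy
  · exact absurd (p.fst_mem_support_of_mem_edges hy) ((cons_isPath_iff h p).mp hp).2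

def altSubgraph : {u v : V} → G.Walk u v → G.Subgraph
  | _, _, nil => ⊥
  | _, _, cons h nil => G.subgraphOfAdj h
  | _, _, cons h (cons _ p) => G.subgraphOfAdj h ⊔ p.altSubgraph

theorem altSubgraph_verts_subset (p : G.Walk u v) :
    p.altSubgraph.verts ⊆ {x | x ∈ p.support} := by
  induction p using altSubgraph.induct with
  | case1 => simp [altSubgraph]
  | case2 => intro x; simp [altSubgraph]
  | case3 _ _ _ _ _ _ p ih =>
    simp only [altSubgraph, Subgraph.verts_sup, subgraphOfAdj_verts, support_cons]
    intro x hx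
    aesop

theorem support_subset_altSubgraph_verts (p : G.Walk u v) (ho : Odd p.length) :
    {x | x ∈ p.support} ⊆ p.altSubgraph.verts := by
  induction p using altSubgraph.induct with
  | case1 => simp at ho
  | case2 => intro x; simp [altSubgraph]
  | case3 _ _ _ _ _ _ p ih =>
    replace ho : Odd p.length := by simpa [Nat.odd_add_one] using ho
    simp only [altSubgraph, Subgraph.verts_sup, subgraphOfAdj_verts, support_cons]
    intro x hx
    have := @ih ho x
    aesop

theorem IsPath.isMatching_altSubgraph {p : G.Walk u v} (hp : p.IsPath) :
    p.altSubgraph.IsMatching := by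
  induction p using altSubgraph.induct with
  | case1 => simp [altSubgraph, Subgraph.IsMatching]
  | case2 _ _ h => exact .subgraphOfAdj h
  | case3 _ _ _ h _ _ p ih =>
    obtain ⟨hp', hu⟩ := (cons_isPath_iff _ _).mp hp
    obtain ⟨hp, hv⟩ := (cons_isPath_iff _ _).mp hp'
    refine (Subgraph.IsMatching.subgraphOfAdj h).sup (ih hp) ?_
    rw [Subgraph.IsMatching.support_eq_verts (.subgraphOfAdj h), (ih hp).support_eq_verts,
      subgraphOfAdj_verts, Set.disjoint_left]
    intro x hx hxp
    have := altSubgraph_verts_subset p hxp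
    aesop

theorem IsPath.altSubgraph_adj_of_isMatching {p : G.Walk u v} (hp : p.IsPath)
    {M : G.Subgraph} (hM : M.IsMatching) (hcov : ∀ x ∈ p.support, x ∈ M.verts)
    (hedge : ∀ x ∈ p.support, ∀ y, M.Adj x y → s(x, y) ∈ p.edges) :
    ∀ x ∈ p.support, ∀ y, M.Adj x y → p.altSubgraph.Adj x y := by
  induction p using altSubgraph.induct with
  | case1 => exact fun x hx y hxy => absurd (hedge x hx y hxy) List.not_mem_nil
  | case2 => exact fun x hx y hxy => by simpa [altSubgraph, eq_comm] using hedge x hx y hxy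
  | case3 a _ c h d h' q ih =>
    obtain ⟨hp', ha⟩ := (cons_isPath_iff _ _).mp hp
    obtain ⟨hq, hc⟩ := (cons_isPath_iff _ _).mp hp'
    have hac : M.Adj a c := by
      obtain ⟨y, hy, -⟩ := hM (hcov a (start_mem_support _))
      rwa [← hp.eq_of_mem_edges_cons (hedge a (start_mem_support _) y hy)]
    have hedge' : ∀ x ∈ q.support, ∀ y, M.Adj x y → s(x, y) ∈ q.edges := by
      intro x hx y hxy
      have hxa : x ≠ a := by rintro rfl; simp_all
      have hxc : x ≠ c := by rintro rfl; simp_all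
      have hyc : y ≠ c := by rintro rfl; exact hxa (hM.eq_of_adj_right hxy hac)
      simpa [hxa, hxc, hyc] using hedge x (by simp [hx]) y hxy
    intro x hx y hxy
    simp only [support_cons, List.mem_cons] at hx
    simp only [altSubgraph, Subgraph.sup_adj, subgraphOfAdj_adj]
    rcases hx with rfl | rfl | hx
    · exact .inl (by rw [hM.eq_of_adj_left hxy hac])
    · exact .inl (by rw [hM.eq_of_adj_left hxy hac.symm, Sym2.eq_swap])
    · exact .inr (ih hq (fun x hx => hcov x (by simp [hx])) hedge' x hx y hxy)

theorem mem_edges_of_notMem_support {u₁ v₁ u₂ v₂ u₃ v₃ : V} {C : G.Walk u₁ v₁} {D : G.Walk u₂ v₂}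
    {P : G.Walk u₃ v₃} (hE : ∀ e ∈ G.edgeSet, e ∈ C.edges ∨ e ∈ D.edges ∨ e ∈ P.edges) {x y : V}
    (hxy : G.Adj x y) (hD : x ∉ D.support) (hP : x ∉ P.support) : s(x, y) ∈ C.edges := by
  rcases hE s(x, y) hxy with he | he | he
  · exact he
  · exact absurd (D.fst_mem_support_of_mem_edges he) hD
  · exact absurd (P.fst_mem_support_of_mem_edges he) hP

theorem IsCycle.notMem_support_of_adj {C : G.Walk v v} (hC : C.IsCycle) (ho : Odd C.length)
    (hcl : ∀ x ∈ C.support, x ≠ v → ∀ y, G.Adj x y → s(x, y) ∈ C.edges)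
    {M : G.Subgraph} (hM : M.IsMatching) (hcov : ∀ x ∈ C.support, x ∈ M.verts)
    {y : V} (hy : M.Adj v y) : y ∉ C.support := by
  classical
  intro hyC
  have hmem : ∀ x, x ∈ C.support.tail.toFinset ↔ x ∈ C.support := fun x => by
    rw [List.mem_toFinset, C.mem_support_iff]
    exact (or_iff_right_of_imp (· ▸ end_mem_tail_support hC.not_nil)).symm
  have heven := hM.even_card_of_forall_adj_mem (s := C.support.tail.toFinset)
    (fun x hx => hcov x ((hmem x).1 hx)) fun x hx z hz => by
      rw [hmem] at hx ⊢
      obtain rfl | hxv := eq_or_ne x v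
      · exact hM.eq_of_adj_left hy hz ▸ hyC
      · exact C.snd_mem_support_of_mem_edges (hcl x hx hxv z (M.adj_sub hz))
  rw [List.toFinset_card_of_nodup hC.support_nodup, List.length_tail, length_support,
    Nat.add_sub_cancel] at heven
  exact Nat.not_even_iff_odd.2 ho heven

theorem IsCycle.mem_edges_of_adj_of_mem_edges_cons {c : V} {h : G.Adj v c} {W : G.Walk c v}
    (hC : (cons h W).IsCycle) (ho : Odd (cons h W).length)
    (hcl : ∀ x ∈ (cons h W).support, x ≠ v → ∀ y, G.Adj x y → s(x, y) ∈ (cons h W).edges)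
    {M : G.Subgraph} (hM : M.IsMatching) (hcov : ∀ x ∈ (cons h W).support, x ∈ M.verts)
    {x y : V} (hxy : M.Adj x y) (he : s(x, y) ∈ (cons h W).edges) : s(x, y) ∈ W.edges := by
  have hc : c ∈ (cons h W).support := by simp
  rw [edges_cons, List.mem_cons, Sym2.eq_iff] at he
  rcases he with (⟨rfl, rfl⟩ | ⟨rfl, rfl⟩) | he
  · exact absurd hc (hC.notMem_support_of_adj ho hcl hM hcov hxy)
  · exact absurd hc (hC.notMem_support_of_adj ho hcl hM hcov hxy.symm)
  · exact he

variable [DecidableEq V]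

theorem IsHamiltonian.isPerfectMatching_altSubgraph {p : G.Walk u v} (hp : p.IsHamiltonian)
    (ho : Odd p.length) : p.altSubgraph.IsPerfectMatching :=
  ⟨hp.isPath.isMatching_altSubgraph,
    fun x => support_subset_altSubgraph_verts p ho (hp.mem_support x)⟩

theorem IsHamiltonian.eq_altSubgraph {p : G.Walk u v} (hp : p.IsHamiltonian)
    (ho : Odd p.length) {M : G.Subgraph} (hM : M.IsPerfectMatching)
    (hMp : ∀ x y, M.Adj x y → s(x, y) ∈ p.edges) : M = p.altSubgraph :=
  hM.eq_of_le hp.isPath.isMatching_altSubgraph ⟨fun x _ => support_subset_altSubgraph_verts p ho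
    (hp.mem_support x), fun x y hxy => hp.isPath.altSubgraph_adj_of_isMatching hM.1
      (fun x _ => hM.2 x) (fun x _ => hMp x) x (hp.mem_support x) y hxy⟩

end Walk
end SimpleGraph

open SimpleGraph.Walk in
theorem IsEvenSubdivT.exists_isHamiltonian_odd_forall_isPerfectMatching [DecidableEq V]
    {G : SimpleGraph V} (h : IsEvenSubdivT G) :
    ∃ (a b : V) (Q : G.Walk a b), Q.IsHamiltonian ∧ Odd Q.length ∧
      ∀ M : G.Subgraph, M.IsPerfectMatching → ∀ x y, M.Adj x y → s(x, y) ∈ Q.edges := by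
  obtain ⟨v, w, C1, C2, P, hC1, hC2, ho1, ho2, hP, hoP, hdisj, hPC1, hPC2, hsupp, hedges⟩ := h
  have hcl1 : ∀ x ∈ C1.support, x ≠ v → ∀ y, G.Adj x y → s(x, y) ∈ C1.edges :=
    fun x hx hxv _ hxy => mem_edges_of_notMem_support (fun e => (hedges e).1) hxy
      (hdisj x hx) fun hxP => hxv (hPC1 x hxP hx)
  have hcl2 : ∀ x ∈ C2.support, x ≠ w → ∀ y, G.Adj x y → s(x, y) ∈ C2.edges :=
    fun x hx hxw _ hxy => mem_edges_of_notMem_support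
      (fun e he => or_left_comm.1 ((hedges e).1 he)) hxy (fun hxC1 => hdisj x hxC1 hx)
      fun hxP => hxw (hPC2 x hxP hx)
  cases C1 with
  | nil => exact absurd hC1 not_isCycle_nil
  | cons h1 W1 =>
  cases C2 with
  | nil => exact absurd hC2 not_isCycle_nil
  | cons h2 W2 =>
  have hW1 := ((cons_isCycle_iff _ _).1 hC1).1
  have hW2 := ((cons_isCycle_iff _ _).1 hC2).1
  have hsub {u c : V} (h : G.Adj u c) (W : G.Walk c u) : ∀ x ∈ (cons h W).support,
      x ∈ W.support := fun x hx => (List.mem_cons.1 hx).elim (· ▸ W.end_mem_support) id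
  have hQ : (W1.append (P.append W2.reverse)).IsPath := by
    refine hW1.append (hP.append hW2.reverse fun x hxP hxW2 =>
      hPC2 x hxP (List.mem_cons_of_mem _ (by simpa using hxW2))) fun x hxW1 hx => ?_
    rw [mem_support_append_iff, support_reverse, List.mem_reverse] at hx
    rcases hx with hx | hx
    · exact hPC1 x hx (by simp [hxW1])
    · exact absurd (by simp [hx]) (hdisj x (by simp [hxW1]))
  refine ⟨_, _, _, hQ.isHamiltonian_of_mem fun x => ?_, ?_, fun M hM x y hxy => ?_⟩
  · rw [mem_support_append_iff, mem_support_append_iff, support_reverse, List.mem_reverse]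
    rcases hsupp x with hx | hx | hx
    · exact .inl (hsub _ _ x hx)
    · exact .inr (.inr (hsub _ _ x hx))
    · exact .inr (.inl hx)
  · simp only [length_cons, Nat.odd_add_one, Nat.not_odd_iff_even] at ho1 ho2
    rw [length_append, length_append, length_reverse]
    exact ho1.add_odd (hoP.add_even ho2)
  · rw [edges_append, edges_append, edges_reverse, List.mem_append, List.mem_append,
      List.mem_reverse]
    rcases (hedges s(x, y)).1 (M.adj_sub hxy) with he | he | he
    · exact .inl (hC1.mem_edges_of_adj_of_mem_edges_cons ho1 hcl1 hM.1 (fun x _ => hM.2 x) hxy he)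
    · exact .inr (.inr
        (hC2.mem_edges_of_adj_of_mem_edges_cons ho2 hcl2 hM.1 (fun x _ => hM.2 x) hxy he))
    · exact .inr (.inl he)

theorem evenSubdivT_unique_perfectMatching_general {V : Type*} (G : SimpleGraph V)
    (h : IsEvenSubdivT G) : ∃! M : G.Subgraph, M.IsPerfectMatching := by
  classical
  obtain ⟨a, b, Q, hQ, hodd, hQM⟩ := h.exists_isHamiltonian_odd_forall_isPerfectMatching
  exact ⟨Q.altSubgraph, hQ.isPerfectMatching_altSubgraph hodd,
    fun M hM => hQ.eq_altSubgraph hodd hM (hQM M hM)⟩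

/-- An even subdivision of `T` has a unique perfect matching. -/
theorem evenSubdivT_unique_perfectMatching {V : Type*} [Fintype V] (G : SimpleGraph V)
    (h : IsEvenSubdivT G) : ∃! M : G.Subgraph, M.IsPerfectMatching :=
  evenSubdivT_unique_perfectMatching_general G h
end

section
/- If K is an even subdivision of T with its unique perfect matching M, then for every edge e of K not in M, the graph K - e is a König-Egerváry graph. -/
open SimpleGraph

variable {V : Type*}

/-!
The perfect matching `M` of `K` is forced. The odd cycle `C₁` has a vertex matched outside it,
and only its tip `v` has neighbours outside, so `v` is matched to the next vertex of `P`; from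
there `M` alternates along `P` starting with its first edge, and along each cycle starting with
its second edge. Hence an edge `e ∉ M` sits at an even position of a cycle or at an odd position
of `P`. Then `M` is still a matching of `K - e`, and choosing vertices at alternating positions,
with the parity switching across `e`, gives an independent set `S` of `K - e` that meets every
edge of `M`. Every vertex outside `S` is matched into `S`, so `n ≤ |S| + |M| ≤ α + ν`, while
`α + ν ≤ n` holds in every graph.
-/

section Counting

variable {G : SimpleGraph V} [Finite V]

lemma bddAbove_ncard_isIndep (G : SimpleGraph V) :
    BddAbove {n | ∃ s : Set V, IsIndep G s ∧ s.ncard = n} :=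
  ⟨Nat.card V, by rintro _ ⟨s, -, rfl⟩; exact Set.ncard_le_card s⟩

lemma bddAbove_ncard_isMatching (G : SimpleGraph V) :
    BddAbove {n | ∃ M : G.Subgraph, M.IsMatching ∧ M.edgeSet.ncard = n} :=
  ⟨Nat.card (Sym2 V), by rintro _ ⟨M, -, rfl⟩; exact Set.ncard_le_card _⟩

lemma IsIndep.ncard_le_alphaNum {s : Set V} (hs : IsIndep G s) : s.ncard ≤ alphaNum G :=
  le_csSup (bddAbove_ncard_isIndep G) ⟨s, hs, rfl⟩

lemma exists_isIndep_ncard_eq_alphaNum (G : SimpleGraph V) :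
    ∃ s : Set V, IsIndep G s ∧ s.ncard = alphaNum G :=
  Nat.sSup_mem (s := {n | ∃ s : Set V, IsIndep G s ∧ s.ncard = n})
    ⟨0, ∅, by simp [IsIndep], by simp⟩ (bddAbove_ncard_isIndep G)

lemma SimpleGraph.Subgraph.IsMatching.ncard_edgeSet_le_matchNum {M : G.Subgraph}
    (hM : M.IsMatching) : M.edgeSet.ncard ≤ matchNum G :=
  le_csSup (bddAbove_ncard_isMatching G) ⟨M, hM, rfl⟩

lemma exists_isMatching_ncard_eq_matchNum (G : SimpleGraph V) :
    ∃ M : G.Subgraph, M.IsMatching ∧ M.edgeSet.ncard = matchNum G :=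
  Nat.sSup_mem (s := {n | ∃ M : G.Subgraph, M.IsMatching ∧ M.edgeSet.ncard = n})
    ⟨0, ⊥, by simp [Subgraph.IsMatching], by simp⟩ (bddAbove_ncard_isMatching G)

lemma IsIndep.ncard_add_ncard_edgeSet_le {s : Set V} (hs : IsIndep G s) {M : G.Subgraph}
    (hM : M.IsMatching) : s.ncard + M.edgeSet.ncard ≤ Nat.card V := by
  have hout : ∀ e ∈ M.edgeSet, ∃ z ∈ e, z ∉ s := by
    intro e he
    induction e with
    | h x y =>
      by_cases hx : x ∈ s
      · exact ⟨y, Sym2.mem_mk_right x y, fun hy => hs x hx y hy (M.adj_sub he)⟩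
      · exact ⟨x, Sym2.mem_mk_left x y, hx⟩
  rcases M.edgeSet.eq_empty_or_nonempty with hempty | ⟨e, -⟩
  · simpa [hempty] using Set.ncard_le_card s
  have : Nonempty V := ⟨e.out.1⟩
  choose! f hf hfs using hout
  have hinj : Set.InjOn f M.edgeSet := by
    intro e₁ he₁ e₂ he₂ heq
    have h₁ := hf e₁ he₁
    have h₂ := heq ▸ hf e₂ he₂
    generalize f e₁ = z at h₁ h₂
    obtain ⟨y₁, rfl⟩ := Sym2.mem_iff_exists.mp h₁
    obtain ⟨y₂, rfl⟩ := Sym2.mem_iff_exists.mp h₂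
    rw [hM.eq_of_adj_left (M.mem_edgeSet.mp he₁) (M.mem_edgeSet.mp he₂)]
  calc s.ncard + M.edgeSet.ncard ≤ s.ncard + sᶜ.ncard :=
        Nat.add_le_add_left (Set.ncard_le_ncard_of_injOn f hfs hinj) _
    _ = Nat.card V := Set.ncard_add_ncard_compl s

lemma alphaNum_add_matchNum_le (G : SimpleGraph V) : alphaNum G + matchNum G ≤ Nat.card V := by
  obtain ⟨s, hs, hsα⟩ := exists_isIndep_ncard_eq_alphaNum G
  obtain ⟨M, hM, hMν⟩ := exists_isMatching_ncard_eq_matchNum G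
  exact hsα ▸ hMν ▸ hs.ncard_add_ncard_edgeSet_le hM

lemma isKE_of_card_le (h : Nat.card V ≤ alphaNum G + matchNum G) : IsKE G :=
  le_antisymm (alphaNum_add_matchNum_le G) h

lemma SimpleGraph.Subgraph.IsMatching.ncard_edgeSet_le_matchNum_deleteEdges {M : G.Subgraph}
    (hM : M.IsMatching) {e : Sym2 V} (he : e ∉ M.edgeSet) :
    M.edgeSet.ncard ≤ matchNum (G.deleteEdges {e}) :=
  let M' : (G.deleteEdges {e}).Subgraph :=
    { verts := M.verts
      Adj := M.Adj
      adj_sub := fun h => SimpleGraph.deleteEdges_adj.mpr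
        ⟨M.adj_sub h, fun h' => he (Set.mem_singleton_iff.mp h' ▸ M.mem_edgeSet.mpr h)⟩
      edge_vert := M.edge_vert
      symm := M.symm }
  IsMatching.ncard_edgeSet_le_matchNum (M := M') hM

lemma SimpleGraph.Subgraph.IsPerfectMatching.card_le_ncard_add_ncard_edgeSet {M : G.Subgraph}
    (hM : M.IsPerfectMatching) {S : Set V} (hS : ∀ x y, M.Adj x y → x ∈ S ∨ y ∈ S) :
    Nat.card V ≤ S.ncard + M.edgeSet.ncard := by
  choose partner hpartner using fun x => (hM.1 (hM.2 x)).exists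
  have hinj : Set.InjOn (fun x => s(x, partner x)) Sᶜ := by
    intro x hx y hy hxy
    rcases Sym2.eq_iff.mp hxy with ⟨h, -⟩ | ⟨rfl, -⟩
    · exact h
    · exact ((hS _ _ (hpartner y)).elim hy hx).elim
  calc Nat.card V = S.ncard + Sᶜ.ncard := (Set.ncard_add_ncard_compl S).symm
    _ ≤ S.ncard + M.edgeSet.ncard :=
      Nat.add_le_add_left (Set.ncard_le_ncard_of_injOn _ (fun x _ => hpartner x) hinj) _

end Counting

section Matching

variable {G : SimpleGraph V} {M : G.Subgraph}

lemma SimpleGraph.Subgraph.IsPerfectMatching.exists_adj_of_odd_card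
    (hM : M.IsPerfectMatching) {A : Finset V} (hA : Odd A.card) :
    ∃ x ∈ A, ∃ y ∉ A, M.Adj x y := by
  classical
  by_contra! h
  have hmatch : (M.induce A).IsMatching := by
    intro x hx
    obtain ⟨y, hxy, huniq⟩ := hM.1 (hM.2 x)
    exact ⟨y, ⟨hx, by_contra fun hy => h x hx y hy hxy, hxy⟩, fun z hz => huniq z hz.2.2⟩
  have : Fintype (M.induce A).verts := inferInstanceAs (Fintype (A : Set V))
  have := hmatch.even_card
  simp only [Subgraph.induce_verts, Finset.toFinset_coe] at this
  exact Nat.not_even_iff_odd.mpr hA this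

lemma SimpleGraph.Subgraph.IsMatching.adj_of_forall_adj_eq_or_eq (hM : M.IsMatching)
    {x y z u : V} (hxy : M.Adj x y) (hz : z ∈ M.verts) (hzx : z ≠ x)
    (hnbr : ∀ t, G.Adj z t → t = y ∨ t = u) : M.Adj z u := by
  obtain ⟨t, hzt, -⟩ := hM hz
  rcases hnbr t (M.adj_sub hzt) with rfl | rfl
  · exact absurd (hM.eq_of_adj_right hzt hxy) hzx
  · exact hzt

end Matching

namespace SimpleGraph.Walk

variable {G : SimpleGraph V} {u v : V}

lemma exists_eq_getVert_of_mem_edges {p : G.Walk u v} {e : Sym2 V} (he : e ∈ p.edges) :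
    ∃ k < p.length, e = s(p.getVert k, p.getVert (k + 1)) := by
  obtain ⟨k, hk, rfl⟩ := List.mem_iff_getElem.mp he
  exact ⟨k, by simpa using hk, getElem_edges hk⟩

lemma IsCycle.card_support_toFinset [DecidableEq V] {p : G.Walk u u} (hp : p.IsCycle) :
    p.support.toFinset.card = p.length := by
  rw [← cons_tail_support, List.toFinset_cons,
    Finset.insert_eq_of_mem (List.mem_toFinset.mpr (end_mem_tail_support hp.not_nil)),
    List.toFinset_card_of_nodup hp.support_nodup, List.length_tail, length_support]
  rfl

end SimpleGraph.Walk

structure EvenSubdivTData (K : SimpleGraph V) where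
  v : V
  w : V
  C₁ : K.Walk v v
  C₂ : K.Walk w w
  P : K.Walk v w
  isCycle₁ : C₁.IsCycle
  isCycle₂ : C₂.IsCycle
  odd_length₁ : Odd C₁.length
  odd_length₂ : Odd C₂.length
  isPath : P.IsPath
  odd_lengthP : Odd P.length
  notMem_support₂ : ∀ x ∈ C₁.support, x ∉ C₂.support
  eq_v_of_mem : ∀ x ∈ P.support, x ∈ C₁.support → x = v
  eq_w_of_mem : ∀ x ∈ P.support, x ∈ C₂.support → x = w
  mem_edges : ∀ e ∈ K.edgeSet, e ∈ C₁.edges ∨ e ∈ C₂.edges ∨ e ∈ P.edges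

namespace EvenSubdivTData

/-- A vertex is addressed by a piece and a position along its walk. Only the tips have several
addresses: `v` is `C₁` at `0` and at `C₁.length` and `P` at `0`, symmetrically for `w`. -/
inductive Piece
  | cycle₁
  | cycle₂
  | path

variable {K : SimpleGraph V} (T : EvenSubdivTData K)

def swap : EvenSubdivTData K where
  v := T.w
  w := T.v
  C₁ := T.C₂
  C₂ := T.C₁
  P := T.P.reverse
  isCycle₁ := T.isCycle₂
  isCycle₂ := T.isCycle₁
  odd_length₁ := T.odd_length₂
  odd_length₂ := T.odd_length₁
  isPath := T.isPath.reverse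
  odd_lengthP := by simpa using T.odd_lengthP
  notMem_support₂ x h₂ h₁ := T.notMem_support₂ x h₁ h₂
  eq_v_of_mem x hP := T.eq_w_of_mem x (by simpa using hP)
  eq_w_of_mem x hP := T.eq_v_of_mem x (by simpa using hP)
  mem_edges e he := by rcases T.mem_edges e he with h | h | h <;> simp [h]

def len : Piece → ℕ
  | .cycle₁ => T.C₁.length
  | .cycle₂ => T.C₂.length
  | .path => T.P.length

def vert : Piece → ℕ → V
  | .cycle₁ => T.C₁.getVert
  | .cycle₂ => T.C₂.getVert
  | .path => T.P.getVert

lemma vert_eq_v_iff {π : Piece} {k : ℕ} (hk : k ≤ T.len π) :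
    T.vert π k = T.v ↔ π = .cycle₁ ∧ (k = 0 ∨ k = T.C₁.length) ∨ π = .path ∧ k = 0 := by
  cases π with
  | cycle₁ => simpa [vert] using T.isCycle₁.getVert_endpoint_iff hk
  | cycle₂ =>
    simp only [vert, reduceCtorEq, false_and, or_self, iff_false]
    exact fun h => T.notMem_support₂ _ T.C₁.start_mem_support (h ▸ T.C₂.getVert_mem_support k)
  | path => simpa [vert] using T.isPath.getVert_eq_start_iff hk

lemma vert_eq_w_iff {π : Piece} {k : ℕ} (hk : k ≤ T.len π) :
    T.vert π k = T.w ↔ π = .cycle₂ ∧ (k = 0 ∨ k = T.C₂.length) ∨ π = .path ∧ k = T.P.length := by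
  cases π with
  | cycle₁ =>
    simp only [vert, reduceCtorEq, false_and, or_self, iff_false]
    exact fun h => T.notMem_support₂ _ (T.C₁.getVert_mem_support k)
      (by rw [h]; exact T.C₂.start_mem_support)
  | cycle₂ => simpa [vert] using T.isCycle₂.getVert_endpoint_iff hk
  | path => simpa [vert] using T.isPath.getVert_eq_end_iff hk

lemma eq_of_vert_eq {π π' : Piece} {k k' : ℕ} (hk : k ≤ T.len π) (hk' : k' ≤ T.len π')
    (h : T.vert π k = T.vert π' k') (hv : T.vert π k ≠ T.v) (hw : T.vert π k ≠ T.w) :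
    π = π' ∧ k = k' := by
  have hv' : T.vert π' k' ≠ T.v := h ▸ hv
  rw [Ne, T.vert_eq_v_iff hk] at hv
  rw [Ne, T.vert_eq_v_iff hk'] at hv'
  have hw' : T.vert π' k' ≠ T.w := h ▸ hw
  rw [Ne, T.vert_eq_w_iff hk] at hw
  rw [Ne, T.vert_eq_w_iff hk'] at hw'
  cases π <;> cases π' <;> simp only [len, vert, true_and, reduceCtorEq, false_and, or_false,
    false_or, not_or] at hk hk' h hv hv' hw hw' ⊢
  · exact T.isCycle₁.getVert_injOn' (by simp only [Set.mem_ofPred_eq]; omega) (by simp only [Set.mem_ofPred_eq]; omega) h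
  · exact T.notMem_support₂ _ (T.C₁.getVert_mem_support k)
      (by rw [h]; exact T.C₂.getVert_mem_support k')
  · have := T.eq_v_of_mem _ (by rw [h]; exact T.P.getVert_mem_support k') (T.C₁.getVert_mem_support k)
    have := (T.isCycle₁.getVert_endpoint_iff hk).mp this
    omega
  · exact T.notMem_support₂ _ (T.C₁.getVert_mem_support k')
      (by rw [← h]; exact T.C₂.getVert_mem_support k)
  · exact T.isCycle₂.getVert_injOn' (by simp only [Set.mem_ofPred_eq]; omega) (by simp only [Set.mem_ofPred_eq]; omega) h
  · have := T.eq_w_of_mem _ (by rw [h]; exact T.P.getVert_mem_support k') (T.C₂.getVert_mem_support k)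
    have := (T.isCycle₂.getVert_endpoint_iff hk).mp this
    omega
  · have := T.eq_v_of_mem _ (T.P.getVert_mem_support k) (by rw [h]; exact T.C₁.getVert_mem_support k')
    exact hv ((T.isPath.getVert_eq_start_iff hk).mp this)
  · have := T.eq_w_of_mem _ (T.P.getVert_mem_support k) (by rw [h]; exact T.C₂.getVert_mem_support k')
    exact hw ((T.isPath.getVert_eq_end_iff hk).mp this)
  · exact T.isPath.getVert_injOn hk hk' h

lemma exists_of_adj {x y : V} (h : K.Adj x y) :
    ∃ π k, k < T.len π ∧ s(x, y) = s(T.vert π k, T.vert π (k + 1)) := by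
  rcases T.mem_edges _ (K.mem_edgeSet.mpr h) with he | he | he
  · obtain ⟨k, hk, he⟩ := Walk.exists_eq_getVert_of_mem_edges he
    exact ⟨.cycle₁, k, hk, he⟩
  · obtain ⟨k, hk, he⟩ := Walk.exists_eq_getVert_of_mem_edges he
    exact ⟨.cycle₂, k, hk, he⟩
  · obtain ⟨k, hk, he⟩ := Walk.exists_eq_getVert_of_mem_edges he
    exact ⟨.path, k, hk, he⟩

lemma eq_vert_pred_or_succ_of_adj {π : Piece} {k : ℕ} (h₀ : 0 < k) (hk : k < T.len π) {y : V}
    (hy : K.Adj (T.vert π k) y) : y = T.vert π (k - 1) ∨ y = T.vert π (k + 1) := by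
  have hv : T.vert π k ≠ T.v := fun h => by
    rcases (T.vert_eq_v_iff hk.le).mp h with ⟨rfl, _⟩ | ⟨rfl, _⟩ <;> simp only [len] at hk <;> omega
  have hw : T.vert π k ≠ T.w := fun h => by
    rcases (T.vert_eq_w_iff hk.le).mp h with ⟨rfl, _⟩ | ⟨rfl, _⟩ <;> simp only [len] at hk <;> omega
  obtain ⟨π', j, hj, hedge⟩ := T.exists_of_adj hy
  rcases Sym2.eq_iff.mp hedge with ⟨h, rfl⟩ | ⟨h, rfl⟩
  · obtain ⟨rfl, rfl⟩ := T.eq_of_vert_eq hk.le hj.le h hv hw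
    exact Or.inr rfl
  · obtain ⟨rfl, rfl⟩ := T.eq_of_vert_eq hk.le hj h hv hw
    exact Or.inl rfl

variable {M : K.Subgraph}

lemma adj_v_getVert_one (hM : M.IsPerfectMatching) : M.Adj T.v (T.P.getVert 1) := by
  classical
  obtain ⟨x, hx, y, hy, hxy⟩ :=
    hM.exists_adj_of_odd_card (T.isCycle₁.card_support_toFinset ▸ T.odd_length₁)
  rw [List.mem_toFinset] at hx hy
  obtain ⟨k, rfl, hk⟩ := Walk.mem_support_iff_exists_getVert.mp hx
  have hkv : T.C₁.getVert k = T.v := by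
    by_contra hne
    rw [T.isCycle₁.getVert_endpoint_iff hk] at hne
    rcases T.eq_vert_pred_or_succ_of_adj (π := .cycle₁) (by omega) (by simp only [len]; omega)
      (M.adj_sub hxy) with rfl | rfl <;> exact hy (Walk.getVert_mem_support _ _)
  rw [hkv] at hxy
  obtain ⟨π, j, hj, hedge⟩ := T.exists_of_adj (M.adj_sub hxy)
  rcases Sym2.eq_iff.mp hedge with ⟨h, rfl⟩ | ⟨h, rfl⟩ <;>
    rcases (T.vert_eq_v_iff (by omega)).mp h.symm with ⟨rfl, -⟩ | ⟨rfl, hj0⟩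
  · exact absurd (Walk.getVert_mem_support _ _) hy
  · rwa [hj0] at hxy
  · exact absurd (Walk.getVert_mem_support _ _) hy
  · omega

lemma adj_path_getVert_even (hM : M.IsPerfectMatching) :
    ∀ t, 2 * t < T.P.length → M.Adj (T.P.getVert (2 * t)) (T.P.getVert (2 * t + 1))
  | 0, _ => by simpa using T.adj_v_getVert_one hM
  | t + 1, ht => by
    have ih := adj_path_getVert_even hM t (by omega)
    refine hM.1.adj_of_forall_adj_eq_or_eq ih (hM.2 _) (fun h => ?_) (fun y hy => ?_)
    · have := T.isPath.getVert_injOn (by simp only [Set.mem_ofPred_eq]; omega) (by simp only [Set.mem_ofPred_eq]; omega) h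
      omega
    · simpa [vert, show 2 * (t + 1) - 1 = 2 * t + 1 by omega] using
        T.eq_vert_pred_or_succ_of_adj (π := .path) (by omega) (by simp only [len]; omega) hy

lemma adj_path_iff (hM : M.IsPerfectMatching) {k : ℕ} (hk : k < T.P.length) :
    M.Adj (T.P.getVert k) (T.P.getVert (k + 1)) ↔ k % 2 = 0 := by
  refine ⟨fun h => ?_, fun h => ?_⟩
  · by_contra hodd
    have hprev := T.adj_path_getVert_even hM (k / 2) (by omega)
    rw [show 2 * (k / 2) + 1 = k by omega] at hprev
    have := T.isPath.getVert_injOn (by simp only [Set.mem_ofPred_eq]; omega) (by simp only [Set.mem_ofPred_eq]; omega)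
      (hM.1.eq_of_adj_left hprev.symm h)
    omega
  · simpa [show 2 * (k / 2) = k by omega] using T.adj_path_getVert_even hM (k / 2) (by omega)

lemma C₁_getVert_one_ne : T.C₁.getVert 1 ≠ T.P.getVert 1 := fun h => by
  have h₃ := T.isCycle₁.three_le_length
  have := T.eq_v_of_mem _ (h ▸ T.P.getVert_mem_support 1) (T.C₁.getVert_mem_support 1)
  have := (T.isCycle₁.getVert_endpoint_iff (by omega)).mp this
  omega

lemma adj_cycle₁_getVert_odd (hM : M.IsPerfectMatching) :
    ∀ t, 2 * t + 1 < T.C₁.length →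
      M.Adj (T.C₁.getVert (2 * t + 1)) (T.C₁.getVert (2 * t + 2))
  | 0, h => by
    refine hM.1.adj_of_forall_adj_eq_or_eq (T.adj_v_getVert_one hM).symm (hM.2 _)
      T.C₁_getVert_one_ne (fun y hy => ?_)
    simpa [vert] using
      T.eq_vert_pred_or_succ_of_adj (π := .cycle₁) (k := 1) (by omega) (by simp only [len]; omega) hy
  | t + 1, h => by
    have ih := adj_cycle₁_getVert_odd hM t (by omega)
    refine hM.1.adj_of_forall_adj_eq_or_eq ih (hM.2 _) (fun h => ?_) (fun y hy => ?_)
    · have := T.isCycle₁.getVert_injOn' (by simp only [Set.mem_ofPred_eq]; omega) (by simp only [Set.mem_ofPred_eq]; omega) h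
      omega
    · simpa [vert, show 2 * (t + 1) = 2 * t + 2 by omega] using
        T.eq_vert_pred_or_succ_of_adj (π := .cycle₁) (by omega) (by simp only [len]; omega) hy

lemma adj_cycle₁_iff (hM : M.IsPerfectMatching) {k : ℕ} (hk : k < T.C₁.length) :
    M.Adj (T.C₁.getVert k) (T.C₁.getVert (k + 1)) ↔ k % 2 = 1 := by
  refine ⟨fun h => ?_, fun h => ?_⟩
  · by_contra heven
    rcases Nat.eq_zero_or_pos k with rfl | hpos
    · exact T.C₁_getVert_one_ne (hM.1.eq_of_adj_left (by simpa using h) (T.adj_v_getVert_one hM))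
    · have hprev := T.adj_cycle₁_getVert_odd hM ((k - 2) / 2) (by omega)
      rw [show 2 * ((k - 2) / 2) + 1 = k - 1 by omega, show 2 * ((k - 2) / 2) + 2 = k by omega]
        at hprev
      exact T.isCycle₁.getVert_sub_one_ne_getVert_add_one hk.le
        (hM.1.eq_of_adj_left hprev.symm h)
  · simpa [show 2 * (k / 2) + 1 = k by omega, show 2 * (k / 2) + 2 = k + 1 by omega] using
      T.adj_cycle₁_getVert_odd hM (k / 2) (by omega)

def IsMatchedAt : Piece → ℕ → Prop
  | .path, k => k % 2 = 0
  | _, k => k % 2 = 1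

lemma mk_mem_edgeSet_iff (hM : M.IsPerfectMatching) {π : Piece} {k : ℕ} (hk : k < T.len π) :
    s(T.vert π k, T.vert π (k + 1)) ∈ M.edgeSet ↔ IsMatchedAt π k := by
  rw [Subgraph.mem_edgeSet]
  cases π with
  | cycle₁ => exact T.adj_cycle₁_iff hM hk
  | cycle₂ => exact T.swap.adj_cycle₁_iff hM hk
  | path => exact T.adj_path_iff hM hk

/-- A predicate on addresses describes the vertex set `colourSet g` faithfully once it takes
the same value at all addresses of each tip. -/
def AgreesAtTips (g : Piece → ℕ → Prop) : Prop :=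
  (g .cycle₁ 0 ↔ g .path 0) ∧ (g .cycle₁ T.C₁.length ↔ g .path 0) ∧
    (g .cycle₂ 0 ↔ g .path T.P.length) ∧ (g .cycle₂ T.C₂.length ↔ g .path T.P.length)

def colourSet (g : Piece → ℕ → Prop) : Set V :=
  {x | ∃ π k, k ≤ T.len π ∧ T.vert π k = x ∧ g π k}

variable {T} {g : Piece → ℕ → Prop}

lemma AgreesAtTips.iff_of_vert_eq_v (hg : T.AgreesAtTips g) {π : Piece} {k : ℕ}
    (hk : k ≤ T.len π) (h : T.vert π k = T.v) : g π k ↔ g .path 0 := by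
  rcases (T.vert_eq_v_iff hk).mp h with ⟨rfl, rfl | rfl⟩ | ⟨rfl, rfl⟩
  exacts [hg.1, hg.2.1, Iff.rfl]

lemma AgreesAtTips.iff_of_vert_eq_w (hg : T.AgreesAtTips g) {π : Piece} {k : ℕ}
    (hk : k ≤ T.len π) (h : T.vert π k = T.w) : g π k ↔ g .path T.P.length := by
  rcases (T.vert_eq_w_iff hk).mp h with ⟨rfl, rfl | rfl⟩ | ⟨rfl, rfl⟩
  exacts [hg.2.2.1, hg.2.2.2, Iff.rfl]

lemma AgreesAtTips.vert_mem_colourSet_iff (hg : T.AgreesAtTips g) {π : Piece} {k : ℕ}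
    (hk : k ≤ T.len π) : T.vert π k ∈ T.colourSet g ↔ g π k := by
  refine ⟨fun ⟨π', k', hk', h, hg'⟩ => ?_, fun h => ⟨π, k, hk, rfl, h⟩⟩
  by_cases hv : T.vert π k = T.v
  · exact (hg.iff_of_vert_eq_v hk hv).mpr ((hg.iff_of_vert_eq_v hk' (h.trans hv)).mp hg')
  by_cases hw : T.vert π k = T.w
  · exact (hg.iff_of_vert_eq_w hk hw).mpr ((hg.iff_of_vert_eq_w hk' (h.trans hw)).mp hg')
  obtain ⟨rfl, rfl⟩ := T.eq_of_vert_eq hk' hk h (h ▸ hv) (h ▸ hw)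
  exact hg'

lemma AgreesAtTips.isIndep_colourSet (hg : T.AgreesAtTips g) {e : Sym2 V}
    (h : ∀ π, ∀ k < T.len π, s(T.vert π k, T.vert π (k + 1)) ≠ e → ¬(g π k ∧ g π (k + 1))) :
    IsIndep (K.deleteEdges {e}) (T.colourSet g) := by
  intro x hx y hy hxy
  rw [deleteEdges_adj, Set.mem_singleton_iff] at hxy
  obtain ⟨π, k, hk, hedge⟩ := T.exists_of_adj hxy.1
  refine h π k hk (hedge ▸ hxy.2) ?_
  rw [← hg.vert_mem_colourSet_iff hk.le, ← hg.vert_mem_colourSet_iff hk]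
  rcases Sym2.eq_iff.mp hedge with ⟨rfl, rfl⟩ | ⟨rfl, rfl⟩
  exacts [⟨hx, hy⟩, ⟨hy, hx⟩]

lemma AgreesAtTips.mem_or_mem_colourSet_of_adj (hg : T.AgreesAtTips g)
    (hM : M.IsPerfectMatching)
    (h : ∀ π, ∀ k < T.len π, IsMatchedAt π k → g π k ∨ g π (k + 1)) {x y : V}
    (hxy : M.Adj x y) : x ∈ T.colourSet g ∨ y ∈ T.colourSet g := by
  obtain ⟨π, k, hk, hedge⟩ := T.exists_of_adj (M.adj_sub hxy)
  have hmem := h π k hk ((T.mk_mem_edgeSet_iff hM hk).mp (hedge ▸ hxy))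
  rw [← hg.vert_mem_colourSet_iff hk.le, ← hg.vert_mem_colourSet_iff hk] at hmem
  rcases Sym2.eq_iff.mp hedge with ⟨rfl, rfl⟩ | ⟨rfl, rfl⟩
  exacts [hmem, hmem.symm]

lemma AgreesAtTips.isKE_deleteEdges [Finite V] (hg : T.AgreesAtTips g)
    (hM : M.IsPerfectMatching) {e : Sym2 V} (heM : e ∉ M.edgeSet)
    (hindep : ∀ π, ∀ k < T.len π, s(T.vert π k, T.vert π (k + 1)) ≠ e → ¬(g π k ∧ g π (k + 1)))
    (hcover : ∀ π, ∀ k < T.len π, IsMatchedAt π k → g π k ∨ g π (k + 1)) :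
    IsKE (K.deleteEdges {e}) :=
  isKE_of_card_le <| calc
    Nat.card V ≤ (T.colourSet g).ncard + M.edgeSet.ncard :=
      hM.card_le_ncard_add_ncard_edgeSet fun _ _ => hg.mem_or_mem_colourSet_of_adj hM hcover
    _ ≤ _ := Nat.add_le_add (hg.isIndep_colourSet hindep).ncard_le_alphaNum
      (hM.1.ncard_edgeSet_le_matchNum_deleteEdges heM)

variable (T)

/-- For `e` at position `k` of `C₁` (resp. `P`): alternate positions along every walk, switching
parity across `e`, so that the colour class is independent in `K - e` and meets every edge
of `M`. -/
def cycleCutColouring (k : ℕ) : Piece → ℕ → Prop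
  | .cycle₁, j => j ≤ k ∧ j % 2 = 0 ∨ k < j ∧ j % 2 = 1
  | .cycle₂, j => j % 2 = 1 ∧ j < T.C₂.length
  | .path, j => j % 2 = 0

def pathCutColouring (k : ℕ) : Piece → ℕ → Prop
  | .cycle₁, j => j % 2 = 1 ∧ j < T.C₁.length
  | .cycle₂, j => j % 2 = 1 ∧ j < T.C₂.length
  | .path, j => j ≤ k ∧ j % 2 = 1 ∨ k < j ∧ j % 2 = 0

lemma isKE_deleteEdges_of_mem_edges_C₁ [Finite V] (hM : M.IsPerfectMatching) {e : Sym2 V}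
    (he : e ∈ T.C₁.edges) (heM : e ∉ M.edgeSet) : IsKE (K.deleteEdges {e}) := by
  obtain ⟨k, hk, rfl⟩ := Walk.exists_eq_getVert_of_mem_edges he
  have hk₂ : k % 2 = 0 := by
    have := (T.mk_mem_edgeSet_iff hM (π := .cycle₁) hk).not.mp heM
    simp only [IsMatchedAt] at this
    omega
  have h₁ := Nat.odd_iff.mp T.odd_length₁
  have h₂ := Nat.odd_iff.mp T.odd_length₂
  have hP := Nat.odd_iff.mp T.odd_lengthP
  have hg : T.AgreesAtTips (T.cycleCutColouring k) := by
    simp only [AgreesAtTips, cycleCutColouring, and_true, iff_true]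
    omega
  refine hg.isKE_deleteEdges hM heM ?_ ?_
  · rintro (_ | _ | _) j hj hne <;> simp only [cycleCutColouring, len] at hj ⊢
    · have : j ≠ k := by rintro rfl; exact hne rfl
      omega
    · omega
    · omega
  · rintro (_ | _ | _) j hj hm <;> simp only [cycleCutColouring, len, IsMatchedAt] at hj hm ⊢ <;>
      omega

lemma isKE_deleteEdges_of_mem_edges_P [Finite V] (hM : M.IsPerfectMatching) {e : Sym2 V}
    (he : e ∈ T.P.edges) (heM : e ∉ M.edgeSet) : IsKE (K.deleteEdges {e}) := by
  obtain ⟨k, hk, rfl⟩ := Walk.exists_eq_getVert_of_mem_edges he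
  have hk₂ : k % 2 = 1 := by
    have := (T.mk_mem_edgeSet_iff hM (π := .path) hk).not.mp heM
    simp only [IsMatchedAt] at this
    omega
  have h₁ := Nat.odd_iff.mp T.odd_length₁
  have h₂ := Nat.odd_iff.mp T.odd_length₂
  have hP := Nat.odd_iff.mp T.odd_lengthP
  have hg : T.AgreesAtTips (T.pathCutColouring k) := by
    simp only [AgreesAtTips, pathCutColouring, and_true]
    omega
  refine hg.isKE_deleteEdges hM heM ?_ ?_
  · rintro (_ | _ | _) j hj hne <;> simp only [pathCutColouring, len] at hj ⊢
    · omega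
    · omega
    · have : j ≠ k := by rintro rfl; exact hne rfl
      omega
  · rintro (_ | _ | _) j hj hm <;> simp only [pathCutColouring, len, IsMatchedAt] at hj hm ⊢ <;>
      omega

end EvenSubdivTData

/-- If `K` is an even subdivision of `T` with perfect matching `M` (necessarily unique),
then for every edge `e` of `K` not in `M`, the graph `K - e` is König-Egerváry. -/
theorem evenSubdivT_deleteNonMatchingEdge_isKE {V : Type*} [Fintype V] (K : SimpleGraph V)
    (h : IsEvenSubdivT K) (M : K.Subgraph) (hM : M.IsPerfectMatching)
    (e : Sym2 V) (he : e ∈ K.edgeSet) (heM : e ∉ M.edgeSet) :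
    IsKE (K.deleteEdges {e}) := by
  obtain ⟨v, w, C₁, C₂, P, hC₁, hC₂, ho₁, ho₂, hP, hoP, hd, hPC₁, hPC₂, -, hedge⟩ := h
  let T : EvenSubdivTData K :=
    ⟨v, w, C₁, C₂, P, hC₁, hC₂, ho₁, ho₂, hP, hoP, hd, hPC₁, hPC₂, fun e he => (hedge e).mp he⟩
  rcases T.mem_edges e he with he₁ | he₂ | heP
  · exact T.isKE_deleteEdges_of_mem_edges_C₁ hM he₁ heM
  · exact T.swap.isKE_deleteEdges_of_mem_edges_C₁ hM he₂ heM
  · exact T.isKE_deleteEdges_of_mem_edges_P hM heP heM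
end

section
/- If a graph G has a perfect matching and is a König-Egerváry graph, then G is Egerváry, i.e., G has no spanning subgraph whose components are single edges together with at least one odd cycle. -/
open SimpleGraph

variable {V : Type*}

section Helpers

lemma walk_support_eq_map_getVert {G : SimpleGraph V} {u v : V} (p : G.Walk u v) :
    p.support = (List.range (p.length + 1)).map p.getVert := by
  induction p with
  | nil => simp [Walk.getVert]
  | cons h q ih =>
    rw [Walk.support_cons, Walk.length_cons]
    conv_rhs => rw [List.range_succ_eq_map]
    simp [List.map_map, Function.comp_def, Walk.getVert_cons_succ, ih]

lemma cycle_getVert_injOn {G : SimpleGraph V} {u : V} {p : G.Walk u u} (hp : p.IsCycle) :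
    ∀ i, 1 ≤ i → i ≤ p.length → ∀ j, 1 ≤ j → j ≤ p.length →
      p.getVert i = p.getVert j → i = j := by
  have h := hp.support_nodup
  rw [walk_support_eq_map_getVert, List.range_succ_eq_map, List.map_cons, List.tail_cons,
    List.map_map] at h
  intro i hi1 hi2 j hj1 hj2 hij
  have := List.inj_on_of_nodup_map h (x := i - 1) (y := j - 1)
    (by rw [List.mem_range]; omega) (by rw [List.mem_range]; omega)
  simp only [Function.comp_apply] at this
  have h2 := this
    (by simpa [Nat.succ_eq_add_one, Nat.sub_add_cancel hi1, Nat.sub_add_cancel hj1] using hij)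
  omega

lemma cycle_support_card [DecidableEq V] {G : SimpleGraph V} {u : V} {p : G.Walk u u}
    (hp : p.IsCycle) : p.support.toFinset.card = p.length := by
  have h3 := hp.three_le_length
  have hmem : u ∈ p.support.tail := by
    rw [walk_support_eq_map_getVert, List.range_succ_eq_map, List.map_cons, List.tail_cons,
      List.map_map]
    refine List.mem_map.2 ⟨p.length - 1, by rw [List.mem_range]; omega, ?_⟩
    simp only [Function.comp_apply]
    rw [Nat.succ_eq_add_one, Nat.sub_add_cancel (by omega)]
    exact p.getVert_length
  have hcons : p.support = u :: p.support.tail := p.support_eq_cons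
  have : p.support.toFinset = p.support.tail.toFinset := by
    conv_lhs => rw [hcons]
    rw [List.toFinset_cons, Finset.insert_eq_self.2 (List.mem_toFinset.2 hmem)]
  rw [this, List.toFinset_card_of_nodup hp.support_nodup, List.length_tail,
    Walk.length_support, Nat.add_sub_cancel]

lemma mem_support_exists_idx {G : SimpleGraph V} {u x : V} {p : G.Walk u u}
    (hx : x ∈ p.support) (hl : 1 ≤ p.length) :
    ∃ n, 1 ≤ n ∧ n ≤ p.length ∧ p.getVert n = x := by
  obtain ⟨n, hn, hnl⟩ := Walk.mem_support_iff_exists_getVert.1 hx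
  rcases Nat.eq_zero_or_pos n with h0 | h0
  · exact ⟨p.length, hl, le_refl _, by rw [p.getVert_length, ← hn, h0, p.getVert_zero]⟩
  · exact ⟨n, h0, hnl, hn⟩

lemma cycle_indep_bound [Fintype V] [DecidableEq V] {G : SimpleGraph V} {u : V}
    {p : G.Walk u u} (hp : p.IsCycle) (hodd : Odd p.length)
    {S : Finset V} (hS : ∀ x ∈ S, ∀ y ∈ S, ¬ G.Adj x y) :
    2 * (S ∩ p.support.toFinset).card + 1 ≤ p.support.toFinset.card := by
  classical
  have h3 := hp.three_le_length
  have hlpos : 0 < p.length := by omega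
  set A := S ∩ p.support.toFinset with hA
  set B := p.support.toFinset \ S with hB
  set f : V → V := fun x =>
    if hx : ∃ n, 1 ≤ n ∧ n ≤ p.length ∧ p.getVert n = x then
      p.getVert (hx.choose % p.length + 1) else x with hf
  have key : ∀ x, (hx : ∃ n, 1 ≤ n ∧ n ≤ p.length ∧ p.getVert n = x) →
      p.getVert (hx.choose % p.length) = x ∧ G.Adj x (f x) ∧
      1 ≤ hx.choose % p.length + 1 ∧ hx.choose % p.length + 1 ≤ p.length := by
    intro x hx
    obtain ⟨h1, h2, h3'⟩ := hx.choose_spec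
    have hmodlt : hx.choose % p.length < p.length := Nat.mod_lt _ hlpos
    have hgv : p.getVert (hx.choose % p.length) = x := by
      rcases Nat.lt_or_ge hx.choose p.length with hlt | hge
      · rw [Nat.mod_eq_of_lt hlt]; exact h3'
      · have : hx.choose = p.length := by omega
        rw [this, Nat.mod_self, p.getVert_zero, ← h3', this, p.getVert_length]
    refine ⟨hgv, ?_, by omega, by omega⟩
    have := p.adj_getVert_succ hmodlt
    rw [hgv] at this
    simpa [hf, dif_pos hx] using this
  have hmaps : ∀ x ∈ A, f x ∈ B := by
    intro x hxA
    rw [hA, Finset.mem_inter] at hxA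
    have hx : ∃ n, 1 ≤ n ∧ n ≤ p.length ∧ p.getVert n = x :=
      mem_support_exists_idx (List.mem_toFinset.1 hxA.2) (by omega)
    obtain ⟨hgv, hadj, hi1, hi2⟩ := key x hx
    rw [hB, Finset.mem_sdiff]
    constructor
    · rw [List.mem_toFinset, Walk.mem_support_iff_exists_getVert]
      exact ⟨hx.choose % p.length + 1, by rw [hf]; simp [dif_pos hx], hi2⟩
    · exact fun hfx => hS x hxA.1 (f x) hfx hadj
  have hinj : Set.InjOn f A := by
    intro x hxA y hyA hxy
    rw [hA, Finset.coe_inter, Set.mem_inter_iff] at hxA hyA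
    have hx : ∃ n, 1 ≤ n ∧ n ≤ p.length ∧ p.getVert n = x :=
      mem_support_exists_idx (List.mem_toFinset.1 (by exact_mod_cast hxA.2)) (by omega)
    have hy : ∃ n, 1 ≤ n ∧ n ≤ p.length ∧ p.getVert n = y :=
      mem_support_exists_idx (List.mem_toFinset.1 (by exact_mod_cast hyA.2)) (by omega)
    obtain ⟨hgvx, _, hx1, hx2⟩ := key x hx
    obtain ⟨hgvy, _, hy1, hy2⟩ := key y hy
    rw [hf] at hxy
    simp only [dif_pos hx, dif_pos hy] at hxy
    have := cycle_getVert_injOn hp _ hx1 hx2 _ hy1 hy2 hxy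
    have hmod : hx.choose % p.length = hy.choose % p.length := by omega
    rw [← hgvx, hmod, hgvy]
  have hcard : A.card ≤ B.card :=
    Finset.card_le_card_of_injOn f hmaps hinj
  have hdisj : Disjoint A B := by
    rw [hA, hB]
    exact Finset.disjoint_left.2 fun x hx hx' =>
      (Finset.mem_sdiff.1 hx').2 (Finset.mem_inter.1 hx).1
  have hsub : A ∪ B ⊆ p.support.toFinset := by
    intro x hx
    rcases Finset.mem_union.1 hx with h | h
    · exact (Finset.mem_inter.1 h).2
    · exact (Finset.mem_sdiff.1 h).1
  have := Finset.card_le_card hsub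
  rw [Finset.card_union_of_disjoint hdisj] at this
  have hodd' : Odd p.support.toFinset.card := by rw [cycle_support_card hp]; exact hodd
  obtain ⟨m, hm⟩ := hodd'
  omega

lemma matching_indep_bound [DecidableEq V] {G : SimpleGraph V} {M : G.Subgraph}
    (hM : M.IsMatching) {S Mv : Finset V} (hMv : ∀ v, v ∈ Mv ↔ v ∈ M.verts)
    (hS : ∀ x ∈ S, ∀ y ∈ S, ¬ G.Adj x y) :
    2 * (S ∩ Mv).card ≤ Mv.card := by
  classical
  set f : V → V := fun v => if h : v ∈ M.verts then (hM h).choose else v with hf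
  have hfadj : ∀ v (h : v ∈ M.verts), M.Adj v (f v) := by
    intro v h
    simp only [hf, dif_pos h]
    exact (hM h).choose_spec.1
  have hmaps : ∀ x ∈ S ∩ Mv, f x ∈ Mv \ S := by
    intro x hx
    rw [Finset.mem_inter] at hx
    have hxv : x ∈ M.verts := (hMv x).1 hx.2
    have hadj := hfadj x hxv
    rw [Finset.mem_sdiff, hMv]
    exact ⟨M.edge_vert hadj.symm, fun hfS => hS x hx.1 (f x) hfS (M.adj_sub hadj)⟩
  have hinj : Set.InjOn f ↑(S ∩ Mv) := by
    intro a ha b hb hab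
    rw [Finset.coe_inter, Set.mem_inter_iff] at ha hb
    have hav : a ∈ M.verts := (hMv a).1 (by exact_mod_cast ha.2)
    have hbv : b ∈ M.verts := (hMv b).1 (by exact_mod_cast hb.2)
    have h1 := hfadj a hav
    have h2 := hfadj b hbv
    rw [hab] at h1
    have hw : f b ∈ M.verts := M.edge_vert h2.symm
    obtain ⟨z, _, huniq⟩ := hM hw
    rw [huniq a h1.symm, huniq b h2.symm]
  have hcard : (S ∩ Mv).card ≤ (Mv \ S).card :=
    Finset.card_le_card_of_injOn f hmaps hinj
  have hdisj : Disjoint (S ∩ Mv) (Mv \ S) :=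
    Finset.disjoint_left.2 fun x hx hx' =>
      (Finset.mem_sdiff.1 hx').2 (Finset.mem_inter.1 hx).1
  have hsub : (S ∩ Mv) ∪ (Mv \ S) ⊆ Mv := by
    intro x hx
    rcases Finset.mem_union.1 hx with h | h
    · exact (Finset.mem_inter.1 h).2
    · exact (Finset.mem_sdiff.1 h).1
  have := Finset.card_le_card hsub
  rw [Finset.card_union_of_disjoint hdisj] at this
  omega

lemma matching_edge_bound [Fintype V] {G : SimpleGraph V} {N : G.Subgraph}
    (hN : N.IsMatching) : 2 * N.edgeSet.ncard ≤ Fintype.card V := by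
  classical
  have huniq : ∀ (e e' : Sym2 V), e ∈ N.edgeSet → e' ∈ N.edgeSet → ∀ z, z ∈ e → z ∈ e' →
      e = e' := by
    intro e e' he he' z hz hz'
    obtain ⟨y, rfl⟩ := Sym2.mem_iff_exists.1 hz
    obtain ⟨y', rfl⟩ := Sym2.mem_iff_exists.1 hz'
    rw [Subgraph.mem_edgeSet] at he he'
    obtain ⟨w, _, hu⟩ := hN (N.edge_vert he)
    rw [hu y he, hu y' he']
  set f : ↑N.edgeSet × Bool → V := fun x =>
    if x.2 then x.1.1.out.1 else x.1.1.out.2 with hf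
  have hmem : ∀ (x : ↑N.edgeSet × Bool), f x ∈ x.1.1 := by
    rintro ⟨⟨e, he⟩, b⟩
    cases b
    · exact e.out_snd_mem
    · exact e.out_fst_mem
  have hinj : Function.Injective f := by
    rintro ⟨⟨e, he⟩, b⟩ ⟨⟨e', he'⟩, b'⟩ hfe
    have h1 := hmem (⟨⟨e, he⟩, b⟩ : ↑N.edgeSet × Bool)
    have h2 := hmem (⟨⟨e', he'⟩, b'⟩ : ↑N.edgeSet × Bool)
    rw [hfe] at h1
    have hee : e = e' := huniq e e' he he' _ h1 h2
    subst hee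
    simp only [Prod.mk.injEq, Subtype.mk.injEq, true_and]
    by_contra hbb
    have hout : e.out.1 = e.out.2 := by
      rcases b with _ | _ <;> rcases b' with _ | _
      · exact absurd rfl hbb
      · simp only [hf, if_true, if_false, Bool.false_eq_true] at hfe; exact hfe.symm
      · simp only [hf, if_true, if_false, Bool.false_eq_true] at hfe; exact hfe
      · exact absurd rfl hbb
    have heq : e = s(e.out.1, e.out.2) := by rw [Sym2.mk, e.out_eq]
    have hadj : N.Adj e.out.1 e.out.2 := by
      rw [← Subgraph.mem_edgeSet, ← heq]; exact he
    rw [hout] at hadj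
    exact (N.adj_sub hadj).ne rfl
  have hle : Nat.card (↑N.edgeSet × Bool) ≤ Nat.card V :=
    Nat.card_le_card_of_injective f hinj
  rw [Nat.card_prod, Nat.card_coe_set_eq, Nat.card_eq_fintype_card,
    Nat.card_eq_fintype_card, Fintype.card_bool] at hle
  omega

lemma alpha_attained [Fintype V] (G : SimpleGraph V) :
    ∃ s : Set V, IsIndep G s ∧ s.ncard = alphaNum G := by
  have hne : {n | ∃ s : Set V, IsIndep G s ∧ s.ncard = n}.Nonempty :=
    ⟨0, ∅, fun x hx => absurd hx (Set.notMem_empty x), by simp⟩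
  have hbdd : BddAbove {n | ∃ s : Set V, IsIndep G s ∧ s.ncard = n} := by
    refine ⟨Fintype.card V, fun m hm => ?_⟩
    obtain ⟨s, _, hs⟩ := hm
    rw [← hs]
    calc s.ncard ≤ (Set.univ : Set V).ncard :=
          Set.ncard_le_ncard (Set.subset_univ s) Set.finite_univ
      _ = Fintype.card V := by rw [Set.ncard_univ, Nat.card_eq_fintype_card]
  exact Nat.sSup_mem hne hbdd

lemma two_matchNum_le [Fintype V] (G : SimpleGraph V) (heven : Even (Fintype.card V)) :
    2 * matchNum G ≤ Fintype.card V := by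
  obtain ⟨t, ht⟩ := heven
  have hbot : (⊥ : G.Subgraph).IsMatching := by
    intro v hv
    simp only [Subgraph.verts_bot, Set.mem_empty_iff_false] at hv
  have hne : {n | ∃ M : G.Subgraph, M.IsMatching ∧ M.edgeSet.ncard = n}.Nonempty :=
    ⟨0, ⊥, hbot, by simp [Subgraph.edgeSet_bot]⟩
  have : matchNum G ≤ t := by
    refine csSup_le hne ?_
    rintro m ⟨N, hN, hm⟩
    have := matching_edge_bound hN
    omega
  omega

end Helpers

/-- If a graph with a perfect matching is König-Egerváry, then it is Egerváry. -/
theorem ke_implies_egervary {V : Type*} [Fintype V] (G : SimpleGraph V)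
    (hPM : HasPM G) (hKE : IsKE G) : IsEgervary G := by
  classical
  rintro ⟨M, k, u, C, hk, hM, hCyc, hDisj, hMC, hCover⟩
  obtain ⟨MP, hMP⟩ := hPM
  have heven := hMP.even_card
  obtain ⟨S, hSind, hScard⟩ := alpha_attained G
  set Sf := (Set.toFinite S).toFinset with hSfdef
  have hSf : ∀ x, x ∈ Sf ↔ x ∈ S := fun x => Set.Finite.mem_toFinset _
  have hScard' : Sf.card = alphaNum G := by
    rw [← hScard, Set.ncard_eq_toFinset_card S (Set.toFinite S)]
  set Mv := (Set.toFinite M.verts).toFinset with hMvdef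
  have hMv : ∀ x, x ∈ Mv ↔ x ∈ M.verts := fun x => Set.Finite.mem_toFinset _
  set Ti : Fin k → Finset V := fun i => (C i).support.toFinset with hTi
  have hTmem : ∀ i x, x ∈ Ti i ↔ x ∈ (C i).support := by
    intro i x; rw [hTi]; exact List.mem_toFinset
  have hSind' : ∀ x ∈ Sf, ∀ y ∈ Sf, ¬ G.Adj x y :=
    fun x hx y hy => hSind x ((hSf x).1 hx) y ((hSf y).1 hy)
  have hMbound : 2 * (Sf ∩ Mv).card ≤ Mv.card := matching_indep_bound hM hMv hSind'
  have hTbound : ∀ i, 2 * (Sf ∩ Ti i).card + 1 ≤ (Ti i).card :=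
    fun i => cycle_indep_bound (hCyc i).1 (hCyc i).2 hSind'
  -- disjointness
  have hdisjMT : ∀ i, Disjoint Mv (Ti i) := by
    intro i
    refine Finset.disjoint_left.2 fun x hx hx' => ?_
    exact hMC i x ((hTmem i x).1 hx') ((hMv x).1 hx)
  have hdisjTT : ∀ i j, i ≠ j → Disjoint (Ti i) (Ti j) := by
    intro i j hij
    refine Finset.disjoint_left.2 fun x hx hx' => ?_
    exact hDisj i j hij x ((hTmem i x).1 hx) ((hTmem j x).1 hx')
  -- total cardinality
  have huniv : (Finset.univ : Finset V) = Mv ∪ Finset.univ.biUnion Ti := by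
    ext x
    simp only [Finset.mem_univ, true_iff, Finset.mem_union, Finset.mem_biUnion]
    rcases hCover x with h | ⟨i, h⟩
    · exact Or.inl ((hMv x).2 h)
    · exact Or.inr ⟨i, by simp, (hTmem i x).2 h⟩
  have hdMvB : Disjoint Mv (Finset.univ.biUnion Ti) :=
    Finset.disjoint_biUnion_right _ _ _ |>.2 fun i _ => hdisjMT i
  have htot : Fintype.card V = Mv.card + ∑ i, (Ti i).card := by
    rw [← Finset.card_univ, huniv, Finset.card_union_of_disjoint hdMvB,
      Finset.card_biUnion fun i _ j _ hij => hdisjTT i j hij]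
  -- split Sf
  have hSfeq : Sf = (Sf ∩ Mv) ∪ Finset.univ.biUnion (fun i => Sf ∩ Ti i) := by
    ext x
    simp only [Finset.mem_union, Finset.mem_biUnion, Finset.mem_inter]
    constructor
    · intro hx
      rcases hCover x with h | ⟨i, h⟩
      · exact Or.inl ⟨hx, (hMv x).2 h⟩
      · exact Or.inr ⟨i, by simp, hx, (hTmem i x).2 h⟩
    · rintro (⟨h, _⟩ | ⟨i, _, h, _⟩) <;> exact h
  have hdSB : Disjoint (Sf ∩ Mv) (Finset.univ.biUnion fun i => Sf ∩ Ti i) := by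
    refine Finset.disjoint_biUnion_right _ _ _ |>.2 fun i _ => ?_
    exact (hdisjMT i).mono Finset.inter_subset_right Finset.inter_subset_right
  have hSsplit : Sf.card = (Sf ∩ Mv).card + ∑ i, (Sf ∩ Ti i).card := by
    conv_lhs => rw [hSfeq]
    rw [Finset.card_union_of_disjoint hdSB,
      Finset.card_biUnion fun i _ j _ hij =>
        (hdisjTT i j hij).mono Finset.inter_subset_right Finset.inter_subset_right]
  -- sum the cycle bounds
  have hsum : 2 * (∑ i, (Sf ∩ Ti i).card) + k ≤ ∑ i, (Ti i).card := by
    calc 2 * (∑ i, (Sf ∩ Ti i).card) + k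
        = ∑ i : Fin k, (2 * (Sf ∩ Ti i).card + 1) := by
          rw [Finset.sum_add_distrib, Finset.sum_const, Finset.card_univ,
            Fintype.card_fin, ← Finset.mul_sum]
          simp
      _ ≤ ∑ i, (Ti i).card := Finset.sum_le_sum fun i _ => hTbound i
  have hnu := two_matchNum_le G heven
  have hKE' : alphaNum G + matchNum G = Fintype.card V := by
    rw [← Nat.card_eq_fintype_card]; exact hKE
  omega
end

section
/- A graph with a perfect matching is Egerváry if and only if it does not contain an even subdivision of T as a nice subgraph. -/
open SimpleGraph

variable {V : Type*}

/-!
If `H` is nice, a perfect matching of `G - V(H)`, a perfect matching of the inner vertices of the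
odd path of `H` and the two odd cycles of `H` span `G`.

Conversely, let a matching `M` and vertex-disjoint odd cycles span `G`, and let `Mpm` be a perfect
matching. Extending `M` by near-perfect matchings of the cycles gives a matching `N` that misses
exactly one base point on each cycle. The `Mpm`-`N` alternating path from the base point of a
cycle `C₁` ends at another base point. Between its last visit to `C₁` and its first visit to
another cycle `C₂` it runs through vertices that `M` matches among themselves, and this stretch is
an odd path `S`. Then `C₁`, `C₂` and `S` form an even subdivision of `T`. If there are no other
cycles, `M` matches everything outside it, so it is nice; otherwise it has a perfect matching,
and trading `C₁` and `C₂` for it leaves a spanning subgraph with fewer cycles.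
-/

section AlternatingSequence

variable {α : Type*} (μ ν : α → α)

def altStep (m : ℕ) : α → α := if Even m then μ else ν

def altSeq (u : α) : ℕ → α
  | 0 => u
  | m + 1 => altStep μ ν m (altSeq u m)

variable {μ ν} {u : α}

theorem altStep_of_even {m : ℕ} (hm : Even m) : altStep μ ν m = μ := if_pos hm

theorem altStep_of_odd {m : ℕ} (hm : Odd m) : altStep μ ν m = ν :=
  if_neg (Nat.not_even_iff_odd.mpr hm)

theorem altStep_eq_of_even_iff {m n : ℕ} (h : Even m ↔ Even n) :
    altStep μ ν m = altStep μ ν n := by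
  simp only [altStep, h]

theorem altSeq_succ (m : ℕ) : altSeq μ ν u (m + 1) = altStep μ ν m (altSeq μ ν u m) := rfl

theorem altSeq_succ_of_even {m : ℕ} (hm : Even m) :
    altSeq μ ν u (m + 1) = μ (altSeq μ ν u m) := by
  rw [altSeq_succ, altStep_of_even hm]

theorem altSeq_succ_of_odd {m : ℕ} (hm : Odd m) :
    altSeq μ ν u (m + 1) = ν (altSeq μ ν u m) := by
  rw [altSeq_succ, altStep_of_odd hm]

theorem altSeq_eq_altStep_succ (hμ : Function.Involutive μ) (hν : Function.Involutive ν)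
    (m : ℕ) : altSeq μ ν u m = altStep μ ν m (altSeq μ ν u (m + 1)) := by
  rw [altSeq_succ]
  by_cases hm : Even m
  · rw [altStep_of_even hm, hμ]
  · rw [altStep_of_odd (Nat.not_even_iff_odd.mp hm), hν]

/-- Walking back along the sequence with the same involutions shows that a first repetition
`x a = x b` forces an earlier one, unless it is a step `x (m + 1) = x m` or, at `a = 0`, comes
from `ν u = u`. -/
theorem altSeq_injOn (hμ : Function.Involutive μ) (hν : Function.Involutive ν) (hu : ν u = u)
    {T : ℕ} (hT : ∀ m < T, altSeq μ ν u (m + 1) ≠ altSeq μ ν u m) :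
    Set.InjOn (altSeq μ ν u) (Set.Iic T) := by
  set x := altSeq μ ν u
  have fwd : ∀ m, x (m + 1) = altStep μ ν m (x m) := fun _ => rfl
  have back : ∀ m, x m = altStep μ ν m (x (m + 1)) := altSeq_eq_altStep_succ hμ hν
  suffices key : ∀ b, b ≤ T → ∀ a < b, x a ≠ x b by
    intro a ha b hb hab
    by_contra hne
    rcases Nat.lt_or_gt_of_ne hne with h | h
    exacts [key b hb a h hab, key a ha b h hab.symm]
  intro b
  induction b using Nat.strong_induction_on with
  | _ b ih =>
  intro hbT a hab heq
  obtain ⟨b, rfl⟩ : ∃ b', b = b' + 1 := ⟨b - 1, by omega⟩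
  rcases Nat.eq_zero_or_pos a with rfl | ha
  · rcases Nat.eq_zero_or_pos b with rfl | hb0
    · exact hT 0 (by omega) heq.symm
    rcases Nat.even_or_odd b with hb | hb
    · have h1 : x 1 = x b := by rw [back b, altStep_of_even hb, ← heq]; rfl
      exact ih b (by omega) (by omega) 1 (by obtain ⟨k, rfl⟩ := hb; omega) h1
    · refine hT b (by omega) ?_
      rw [← heq, back b, altStep_of_odd hb, ← heq]
      exact hu.symm
  by_cases hpar : Even a ↔ Even b
  · rcases Nat.lt_or_ge (a + 1) b with hlt | hge
    · refine ih b (by omega) (by omega) (a + 1) hlt ?_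
      rw [fwd, heq, back b, altStep_eq_of_even_iff hpar]
    · obtain rfl : a = b := by rcases Nat.even_or_odd a with h | h <;> grind
      exact hT a (by omega) heq.symm
  · refine ih b (by omega) (by omega) (a - 1) (by omega) ?_
    rw [back (a - 1), back b, Nat.sub_add_cancel ha, heq, altStep_eq_of_even_iff]
    rcases Nat.even_or_odd a with h | h <;> grind

theorem exists_odd_altSeq_fixed [Finite α] (hμ : Function.Involutive μ) (hμ' : ∀ x, μ x ≠ x)
    (hν : Function.Involutive ν) (hu : ν u = u) :
    ∃ T, Odd T ∧ ν (altSeq μ ν u T) = altSeq μ ν u T := by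
  by_contra! h
  have hstep : ∀ m, altSeq μ ν u (m + 1) ≠ altSeq μ ν u m := by
    intro m
    rcases Nat.even_or_odd m with hm | hm
    · rw [altSeq_succ_of_even hm]
      exact hμ' _
    · rw [altSeq_succ_of_odd hm]
      exact h m hm
  refine not_injective_infinite_finite (altSeq μ ν u) fun a b hab => ?_
  exact altSeq_injOn hμ hν hu (T := max a b) (fun m _ => hstep m) (le_max_left a b)
    (le_max_right a b) hab

end AlternatingSequence

namespace SimpleGraph

variable {G : SimpleGraph V}

namespace Subgraph

variable {M N : G.Subgraph} {x y : V}

open Classical in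
/-- The partner of `x` in `M`; junk value `x` when `M` has no edge at `x`. -/
noncomputable def mate (M : G.Subgraph) (x : V) : V :=
  if h : ∃ y, M.Adj x y then h.choose else x

theorem IsMatching.mate_eq (hM : M.IsMatching) (h : M.Adj x y) : M.mate x = y := by
  have hex : ∃ y, M.Adj x y := ⟨y, h⟩
  rw [mate, dif_pos hex]
  exact hM.eq_of_adj_left hex.choose_spec h

theorem mate_eq_self (hx : x ∉ M.verts) : M.mate x = x := by
  rw [mate, dif_neg]
  rintro ⟨y, hy⟩
  exact hx (M.edge_vert hy)

theorem IsMatching.adj_mate (hM : M.IsMatching) (hx : x ∈ M.verts) : M.Adj x (M.mate x) := by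
  obtain ⟨y, hy, -⟩ := hM hx
  rwa [hM.mate_eq hy]

theorem IsMatching.mate_involutive (hM : M.IsMatching) : Function.Involutive M.mate := by
  intro x
  by_cases hx : x ∈ M.verts
  · exact hM.mate_eq (hM.adj_mate hx).symm
  · rw [mate_eq_self hx, mate_eq_self hx]

theorem IsMatching.mate_eq_self_iff (hM : M.IsMatching) : M.mate x = x ↔ x ∉ M.verts :=
  ⟨fun h hx => (M.adj_sub (hM.adj_mate hx)).ne h.symm, mate_eq_self⟩

theorem IsMatching.adj_of_le (hM : M.IsMatching) (hN : N.IsMatching) (hMN : M ≤ N)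
    (hx : x ∈ M.verts) (h : N.Adj x y) : M.Adj x y := by
  obtain ⟨z, hz, -⟩ := hM hx
  rwa [hN.eq_of_adj_left h (hMN.2 hz)]

theorem IsMatching.sup_of_disjoint_verts (hM : M.IsMatching) (hN : N.IsMatching)
    (h : Disjoint M.verts N.verts) : (M ⊔ N).IsMatching :=
  hM.sup hN (h.mono M.support_subset_verts N.support_subset_verts)

theorem IsMatching.deleteVerts (hM : M.IsMatching) {s : Set V}
    (hs : ∀ x ∈ s, ∀ y, M.Adj x y → y ∈ s) : (M.deleteVerts s).IsMatching := by
  rintro x ⟨hxM, hxs⟩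
  obtain ⟨y, hy, huniq⟩ := hM hxM
  refine ⟨y, deleteVerts_adj.mpr ⟨hxM, hxs, M.edge_vert hy.symm, fun hys => hxs ?_, hy⟩,
    fun z hz => huniq z (deleteVerts_adj.mp hz).2.2.2.2⟩
  exact hs y hys x hy.symm

theorem IsMatching.hasPM_induce (hM : M.IsMatching) : HasPM (G.induce M.verts) := by
  refine ⟨M.comap (Embedding.induce M.verts).toHom, fun x _ => ?_, fun x => x.2⟩
  obtain ⟨y, hy, huniq⟩ := hM x.2
  exact ⟨⟨y, M.edge_vert hy.symm⟩, ⟨M.adj_sub hy, hy⟩, fun z hz => Subtype.ext (huniq z hz.2)⟩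

end Subgraph

theorem exists_isMatching_verts_eq_of_hasPM_induce {s : Set V} (h : HasPM (G.induce s)) :
    ∃ M : G.Subgraph, M.IsMatching ∧ M.verts = s := by
  obtain ⟨N, hN, hNspan⟩ := h
  refine ⟨N.map (Embedding.induce s).toHom, hN.map _ (Embedding.induce (G := G) s).injective, ?_⟩
  rw [Subgraph.map_verts, Subgraph.IsSpanning.verts_eq_univ hNspan, Set.image_univ]
  exact Subtype.range_coe

namespace Walk

variable {a b : V}

theorem IsPath.exists_isMatching {p : G.Walk a b} (hp : p.IsPath) :
    (Even p.length → ∃ M : G.Subgraph, M.IsMatching ∧ M.verts = {x | x ∈ p.support} \ {a}) ∧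
    (Odd p.length → ∃ M : G.Subgraph, M.IsMatching ∧ M.verts = {x | x ∈ p.support}) := by
  induction p with
  | nil =>
    refine ⟨fun _ => ⟨⊥, fun _ h => h.elim, by simp⟩, fun h => by simp at h⟩
  | @cons a x b h q ih =>
    have ha : a ∉ q.support := (cons_isPath_iff h q).mp hp |>.2
    obtain ⟨ihe, iho⟩ := ih hp.of_cons
    refine ⟨fun he => ?_, fun ho => ?_⟩
    · obtain ⟨M, hM, hMv⟩ := iho (by simpa [Nat.even_add_one] using he)
      refine ⟨M, hM, ?_⟩
      ext z
      simp only [hMv, support_cons, Set.mem_ofPred_eq, Set.mem_sdiff, List.mem_cons,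
        Set.mem_singleton_iff]
      constructor
      · exact fun hz => ⟨Or.inr hz, fun hza => ha (hza ▸ hz)⟩
      · rintro ⟨rfl | hz, hza⟩
        exacts [(hza rfl).elim, hz]
    · obtain ⟨M, hM, hMv⟩ := ihe (by simpa [Nat.odd_add_one] using ho)
      refine ⟨G.subgraphOfAdj h ⊔ M, (Subgraph.IsMatching.subgraphOfAdj h).sup_of_disjoint_verts hM
        ?_, ?_⟩
      · rw [subgraphOfAdj_verts, hMv, Set.disjoint_insert_left, Set.disjoint_singleton_left]
        exact ⟨fun hz => ha hz.1, fun hz => hz.2 rfl⟩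
      · ext z
        simp only [Subgraph.verts_sup, subgraphOfAdj_verts, hMv, support_cons, Set.mem_union,
          Set.mem_insert_iff, Set.mem_singleton_iff, Set.mem_sdiff, Set.mem_ofPred_eq,
          List.mem_cons]
        constructor
        · rintro ((rfl | rfl) | ⟨hz, -⟩)
          exacts [Or.inl rfl, Or.inr q.start_mem_support, Or.inr hz]
        · rintro (rfl | hz)
          · exact Or.inl (Or.inl rfl)
          · by_cases hzx : z = x
            exacts [Or.inl (Or.inr hzx), Or.inr ⟨hz, hzx⟩]

theorem IsPath.exists_isMatching_of_odd {p : G.Walk a b} (hp : p.IsPath) (ho : Odd p.length) :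
    ∃ M : G.Subgraph, M.IsMatching ∧ M.verts = {x | x ∈ p.support} :=
  hp.exists_isMatching.2 ho

theorem IsPath.exists_isMatching_inner_of_odd {p : G.Walk a b} (hp : p.IsPath)
    (ho : Odd p.length) :
    ∃ M : G.Subgraph, M.IsMatching ∧ M.verts = {x | x ∈ p.support} \ {a, b} := by
  cases p with
  | nil => simp at ho
  | cons h q =>
    have ha : a ∉ q.support := (cons_isPath_iff h q).mp hp |>.2
    obtain ⟨M, hM, hMv⟩ := hp.of_cons.reverse.exists_isMatching.1
      (by simpa [Nat.odd_add_one] using ho)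
    refine ⟨M, hM, ?_⟩
    ext z
    simp only [hMv, support_reverse, List.mem_reverse, support_cons, Set.mem_sdiff,
      Set.mem_ofPred_eq, Set.mem_singleton_iff, Set.mem_insert_iff, List.mem_cons, not_or]
    constructor
    · exact fun ⟨hz, hzb⟩ => ⟨Or.inr hz, fun hza => ha (hza ▸ hz), hzb⟩
    · rintro ⟨rfl | hz, hza, hzb⟩
      exacts [(hza rfl).elim, ⟨hz, hzb⟩]

theorem IsCycle.exists_isMatching_of_odd {u : V} {c : G.Walk u u} (hc : c.IsCycle)
    (ho : Odd c.length) :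
    ∃ M : G.Subgraph, M.IsMatching ∧ M.verts = {x | x ∈ c.support} \ {u} := by
  cases c with
  | nil => simp at ho
  | cons h q =>
    obtain ⟨M, hM, hMv⟩ := ((cons_isCycle_iff q h).mp hc).1.reverse.exists_isMatching.1
      (by simpa [Nat.odd_add_one] using ho)
    refine ⟨M, hM, ?_⟩
    ext z
    simp only [hMv, support_reverse, List.mem_reverse, support_cons, Set.mem_sdiff,
      Set.mem_ofPred_eq, Set.mem_singleton_iff, List.mem_cons]
    constructor
    · exact fun ⟨hz, hzu⟩ => ⟨Or.inr hz, hzu⟩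
    · rintro ⟨rfl | hz, hzu⟩
      exacts [(hzu rfl).elim, ⟨hz, hzu⟩]

theorem exists_isPath_of_injOn (x : ℕ → V) {e d : ℕ} (hed : e ≤ d)
    (hadj : ∀ m, e ≤ m → m < d → G.Adj (x m) (x (m + 1))) (hinj : Set.InjOn x (Set.Icc e d)) :
    ∃ p : G.Walk (x e) (x d), p.IsPath ∧ p.length = d - e ∧
      ∀ z, z ∈ p.support ↔ ∃ m ∈ Set.Icc e d, x m = z := by
  induction d, hed using Nat.le_induction with
  | base =>
    refine ⟨nil, IsPath.nil, by simp, fun z => ?_⟩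
    simp only [support_nil, List.mem_singleton, Set.Icc_self, Set.mem_singleton_iff]
    exact ⟨fun hz => ⟨e, rfl, hz.symm⟩, fun ⟨m, hm, hxm⟩ => hm ▸ hxm.symm⟩
  | succ d hed ih =>
    obtain ⟨p, hp, hlen, hsupp⟩ := ih (fun m h1 h2 => hadj m h1 (by omega))
      (hinj.mono (Set.Icc_subset_Icc_right (by omega)))
    have hnew : x (d + 1) ∉ p.support := by
      rw [hsupp]
      rintro ⟨m, ⟨hm1, hm2⟩, hxm⟩
      have := hinj ⟨hm1, by omega⟩ ⟨by omega, le_rfl⟩ hxm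
      omega
    refine ⟨p.concat (hadj d hed (by omega)), hp.concat hnew _, by simp [hlen]; omega,
      fun z => ?_⟩
    rw [support_concat, List.mem_append, List.mem_singleton, hsupp]
    constructor
    · rintro (⟨m, ⟨hm1, hm2⟩, rfl⟩ | rfl)
      exacts [⟨m, ⟨hm1, by omega⟩, rfl⟩, ⟨d + 1, ⟨by omega, le_rfl⟩, rfl⟩]
    · rintro ⟨m, ⟨hm1, hm2⟩, rfl⟩
      rcases Nat.lt_or_ge m (d + 1) with h | h
      exacts [Or.inl ⟨m, ⟨hm1, by omega⟩, rfl⟩, Or.inr (by rw [show m = d + 1 by omega])]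

theorem exists_map_hom_eq {H : G.Subgraph} {a b : V} (p : G.Walk a b)
    (hp : p.toSubgraph ≤ H) :
    ∃ q : H.coe.Walk ⟨a, hp.1 p.start_mem_verts_toSubgraph⟩ ⟨b, hp.1 p.end_mem_verts_toSubgraph⟩,
      q.map H.hom = p :=
  ⟨p.mapToSubgraph.map (Subgraph.inclusion hp),
    (map_map _ _ _).trans p.map_mapToSubgraph_hom⟩

end Walk

theorem Subgraph.mem_support_map_hom {H : G.Subgraph} {a b : H.verts} (q : H.coe.Walk a b)
    (z : H.verts) : (z : V) ∈ (q.map H.hom).support ↔ z ∈ q.support := by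
  rw [Walk.support_map]
  exact List.mem_map_of_injective Subgraph.hom_injective

theorem Subgraph.IsPerfectMatching.exists_alternating_path [Finite V] {Mpm N : G.Subgraph}
    (hMpm : Mpm.IsPerfectMatching) (hN : N.IsMatching) {u : V} (hu : u ∉ N.verts) :
    ∃ (x : ℕ → V) (T : ℕ), x 0 = u ∧ Odd T ∧ x T ∉ N.verts ∧ Set.InjOn x (Set.Iic T) ∧
      (∀ m < T, Even m → Mpm.Adj (x m) (x (m + 1))) ∧
      ∀ m < T, Odd m → N.Adj (x m) (x (m + 1)) := by
  classical
  have hμ' : ∀ y, Mpm.mate y ≠ y := fun y => by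
    rw [Ne, hMpm.1.mate_eq_self_iff, not_not]
    exact hMpm.2 y
  have hex := exists_odd_altSeq_fixed hMpm.1.mate_involutive hμ' hN.mate_involutive
    (mate_eq_self hu)
  set x := altSeq Mpm.mate N.mate u
  have hxe : ∀ m, Even m → x (m + 1) = Mpm.mate (x m) := fun _ => altSeq_succ_of_even
  have hxo : ∀ m, Odd m → x (m + 1) = N.mate (x m) := fun _ => altSeq_succ_of_odd
  have hmin : ∀ m < Nat.find hex, Odd m → x (m + 1) ≠ x m := fun m hm hodd => by
    rw [hxo m hodd]
    exact fun h => Nat.find_min hex hm ⟨hodd, h⟩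
  have hstep : ∀ m < Nat.find hex, x (m + 1) ≠ x m := fun m hm => by
    rcases Nat.even_or_odd m with he | ho
    · rw [hxe m he]
      exact hμ' _
    · exact hmin m hm ho
  refine ⟨x, Nat.find hex, rfl, (Nat.find_spec hex).1,
    hN.mate_eq_self_iff.mp (Nat.find_spec hex).2,
    altSeq_injOn hMpm.1.mate_involutive hN.mate_involutive (mate_eq_self hu) hstep,
    fun m _ he => ?_, fun m hm ho => ?_⟩
  · rw [hxe m he]
    exact hMpm.1.adj_mate (hMpm.2 _)
  · have hxm : x m ∈ N.verts := by
      by_contra hxm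
      exact hmin m hm ho (by rw [hxo m ho, mate_eq_self hxm])
    rw [hxo m ho]
    exact hN.adj_mate hxm

/-- Cycles are recorded as closed walks paired with their base points, so that a family of
them is a `Finset`. -/
structure IsOddCycleCover (M : G.Subgraph) (s : Finset (Σ u : V, G.Walk u u)) : Prop where
  isMatching : M.IsMatching
  isCycle : ∀ c ∈ s, c.2.IsCycle
  odd_length : ∀ c ∈ s, Odd c.2.length
  disjoint : ∀ c ∈ s, ∀ c' ∈ s, c ≠ c' → ∀ x ∈ c.2.support, x ∉ c'.2.support
  not_mem_verts : ∀ c ∈ s, ∀ x ∈ c.2.support, x ∉ M.verts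
  cover : ∀ x, x ∈ M.verts ∨ ∃ c ∈ s, x ∈ c.2.support

namespace IsOddCycleCover

variable {M : G.Subgraph} {s : Finset (Σ u : V, G.Walk u u)} {c c' : Σ u : V, G.Walk u u}
  {x : V}

theorem mem_verts_iff (hcov : IsOddCycleCover M s) : x ∈ M.verts ↔ ∀ c ∈ s, x ∉ c.2.support :=
  ⟨fun hx c hc hxc => hcov.not_mem_verts c hc x hxc hx,
    fun h => (hcov.cover x).resolve_right fun ⟨c, hc, hxc⟩ => h c hc hxc⟩

theorem eq_of_mem_support (hcov : IsOddCycleCover M s) (hc : c ∈ s) (hc' : c' ∈ s)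
    (hx : x ∈ c.2.support) (hx' : x ∈ c'.2.support) : c = c' := by
  by_contra hne
  exact hcov.disjoint c hc c' hc' hne x hx hx'

theorem mem_deleteVerts_verts_iff (hcov : IsOddCycleCover M s) {X : Set V} :
    x ∈ (M.deleteVerts X).verts ↔ ¬(x ∈ X ∨ ∃ c ∈ s, x ∈ c.2.support) := by
  rw [Subgraph.deleteVerts_verts, Set.mem_sdiff, hcov.mem_verts_iff]
  simp only [not_or, not_exists, not_and]
  tauto

theorem exists_le_isMatching (hcov : IsOddCycleCover M s) :
    ∃ N : G.Subgraph, N.IsMatching ∧ M ≤ N ∧ (∀ x, x ∉ N.verts ↔ ∃ c ∈ s, c.1 = x) ∧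
      ∀ c ∈ s, ∀ x y, N.Adj x y → x ∈ c.2.support → y ∈ c.2.support := by
  have hnear : ∀ c : s, ∃ Nc : G.Subgraph, Nc.IsMatching ∧
      Nc.verts = {x | x ∈ c.1.2.support} \ {c.1.1} :=
    fun c => (hcov.isCycle _ c.2).exists_isMatching_of_odd (hcov.odd_length _ c.2)
  choose Nc hNc hNcv using hnear
  have hsupp : ∀ c x, x ∈ (Nc c).verts → x ∈ c.1.2.support := fun c x hx => by
    rw [hNcv] at hx
    exact hx.1
  refine ⟨M ⊔ ⨆ c, Nc c, hcov.isMatching.sup_of_disjoint_verts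
    (Subgraph.IsMatching.iSup hNc fun c c' hne => ?_) ?_, le_sup_left, fun x => ?_,
    fun c hc x y hxy hx => ?_⟩
  · refine Set.disjoint_left.mpr fun x hx hx' => hne (Subtype.ext ?_)
    exact hcov.eq_of_mem_support c.2 c'.2 (hsupp _ _ ((Nc c).support_subset_verts hx))
      (hsupp _ _ ((Nc c').support_subset_verts hx'))
  · rw [Subgraph.verts_iSup, Set.disjoint_iUnion_right]
    exact fun c => Set.disjoint_left.mpr fun x hx hx' =>
      hcov.not_mem_verts _ c.2 x (hsupp _ _ hx') hx
  · simp only [Subgraph.verts_sup, Subgraph.verts_iSup, hNcv, Set.mem_union, Set.mem_iUnion,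
      Set.mem_sdiff, Set.mem_ofPred_eq, Set.mem_singleton_iff, not_or, not_exists, not_and,
      not_not, hcov.mem_verts_iff]
    constructor
    · rintro ⟨hxM, hxc⟩
      obtain ⟨c, hc, hxc'⟩ : ∃ c ∈ s, x ∈ c.2.support := by simpa using hxM
      exact ⟨c, hc, (hxc ⟨c, hc⟩ hxc').symm⟩
    · rintro ⟨c, hc, rfl⟩
      refine ⟨fun h => h c hc c.2.start_mem_support, fun c' hc' => ?_⟩
      rw [hcov.eq_of_mem_support c'.2 hc hc' c.2.start_mem_support]
  · rcases Subgraph.sup_adj.mp hxy with h | h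
    · exact (hcov.not_mem_verts c hc x hx (M.edge_vert h)).elim
    · obtain ⟨c', hc'⟩ := Subgraph.iSup_adj.mp h
      have := hcov.eq_of_mem_support c'.2 hc (hsupp _ _ ((Nc c').edge_vert hc')) hx
      exact this ▸ hsupp _ _ ((Nc c').edge_vert hc'.symm)

theorem exists_segment_to_other_cycle (hcov : IsOddCycleCover M s) (x : ℕ → V)
    {c₁ c₂ : Σ u : V, G.Walk u u} {T : ℕ} (hc₁ : c₁ ∈ s) (h0 : x 0 ∈ c₁.2.support)
    (hc₂ : c₂ ∈ s) (hne : c₂ ≠ c₁) (hT : x T ∈ c₂.2.support) :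
    ∃ e d, e < d ∧ d ≤ T ∧ x e ∈ c₁.2.support ∧ (∃ c ∈ s, c ≠ c₁ ∧ x d ∈ c.2.support) ∧
      ∀ m, e < m → m < d → x m ∈ M.verts := by
  classical
  have hex : ∃ n, ∃ c ∈ s, c ≠ c₁ ∧ x n ∈ c.2.support := ⟨T, c₂, hc₂, hne, hT⟩
  obtain ⟨c, hc, hcne, hxd⟩ := Nat.find_spec hex
  set d := Nat.find hex
  set e := Nat.findGreatest (fun m => x m ∈ c₁.2.support) d
  have hxe : x e ∈ c₁.2.support :=
    Nat.findGreatest_spec (P := fun m => x m ∈ c₁.2.support) (Nat.zero_le d) h0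
  have hed : e < d := by
    refine lt_of_le_of_ne (Nat.findGreatest_le d) fun hed => hcne ?_
    rw [hed] at hxe
    exact hcov.eq_of_mem_support hc hc₁ hxd hxe
  refine ⟨e, d, hed, Nat.find_min' hex ⟨c₂, hc₂, hne, hT⟩, hxe, ⟨c, hc, hcne, hxd⟩,
    fun m hem hmd => hcov.mem_verts_iff.mpr fun c' hc' hxm => ?_⟩
  by_cases h : c' = c₁
  · subst h
    exact Nat.findGreatest_is_greatest hem hmd.le hxm
  · exact Nat.find_min hex hmd ⟨c', hc', h, hxm⟩

theorem even_and_odd_of_segment (hcov : IsOddCycleCover M s) {N : G.Subgraph}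
    (hN : N.IsMatching) (hMN : M ≤ N)
    (hNc : ∀ c ∈ s, ∀ x y, N.Adj x y → x ∈ c.2.support → y ∈ c.2.support) {x : ℕ → V}
    {T e d : ℕ} (hNAdj : ∀ m < T, Odd m → N.Adj (x m) (x (m + 1))) (hed : e < d) (hdT : d ≤ T)
    {c₁ c₂ : Σ u : V, G.Walk u u} (hc₁ : c₁ ∈ s) (hc₂ : c₂ ∈ s) (hne : c₂ ≠ c₁)
    (hxe : x e ∈ c₁.2.support) (hxd : x d ∈ c₂.2.support)
    (hinner : ∀ m, e < m → m < d → x m ∈ M.verts) : Even e ∧ Odd d := by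
  have he : Even e := by
    by_contra ho
    have hxe' := hNc c₁ hc₁ _ _ (hNAdj e (by omega) (Nat.not_even_iff_odd.mp ho)) hxe
    rcases Nat.lt_or_ge (e + 1) d with h | h
    · exact hcov.not_mem_verts c₁ hc₁ _ hxe' (hinner _ (by omega) h)
    · rw [show e + 1 = d by omega] at hxe'
      exact hne (hcov.eq_of_mem_support hc₂ hc₁ hxd hxe')
  refine ⟨he, ?_⟩
  by_contra hev
  obtain ⟨k, rfl⟩ := Nat.not_odd_iff_even.mp hev
  obtain ⟨l, rfl⟩ := he
  have hxd' := hcov.isMatching.adj_of_le hN hMN (hinner (k + k - 1) (by omega) (by omega))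
    (hNAdj (k + k - 1) (by omega) ⟨k - 1, by omega⟩)
  rw [show k + k - 1 + 1 = k + k by omega] at hxd'
  exact hcov.not_mem_verts c₂ hc₂ _ hxd (M.edge_vert hxd'.symm)

theorem exists_odd_path_between_cycles [Finite V] (hcov : IsOddCycleCover M s)
    {Mpm : G.Subgraph} (hMpm : Mpm.IsPerfectMatching) {c₁ : Σ u : V, G.Walk u u} (hc₁ : c₁ ∈ s) :
    ∃ c₂ ∈ s, c₂ ≠ c₁ ∧ ∃ a ∈ c₁.2.support, ∃ b ∈ c₂.2.support, ∃ S : G.Walk a b,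
      S.IsPath ∧ Odd S.length ∧ (∀ z ∈ S.support, z = a ∨ z = b ∨ z ∈ M.verts) ∧
      ∀ z ∈ S.support, ∀ y, M.Adj z y → y ∈ S.support := by
  obtain ⟨N, hN, hMN, hNv, hNc⟩ := hcov.exists_le_isMatching
  obtain ⟨x, T, hx0, hT, hxT, hinj, hMpmAdj, hNAdj⟩ :=
    hMpm.exists_alternating_path hN ((hNv _).mpr ⟨c₁, hc₁, rfl⟩)
  obtain ⟨c₂, hc₂, hc₂T⟩ := (hNv _).mp hxT
  have hc₂₁ : c₂ ≠ c₁ := by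
    rintro rfl
    have h0T : 0 = T := hinj (Nat.zero_le T) (le_refl T) (hx0.trans hc₂T)
    rw [← h0T] at hT
    simp at hT
  obtain ⟨e, d, hed, hdT, hxe, ⟨c, hc, hcne, hxd⟩, hinner⟩ :=
    hcov.exists_segment_to_other_cycle x hc₁ (by rw [hx0]; exact c₁.2.start_mem_support) hc₂ hc₂₁
      (by rw [← hc₂T]; exact c₂.2.start_mem_support)
  obtain ⟨he, hd⟩ :=
    hcov.even_and_odd_of_segment hN hMN hNc hNAdj hed hdT hc₁ hc hcne hxe hxd hinner
  obtain ⟨S, hS, hSlen, hSsupp⟩ := Walk.exists_isPath_of_injOn x hed.le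
    (fun m _ hm => (Nat.even_or_odd m).elim (fun h => Mpm.adj_sub (hMpmAdj m (by omega) h))
      (fun h => N.adj_sub (hNAdj m (by omega) h)))
    (hinj.mono fun m hm => hm.2.trans hdT)
  refine ⟨c, hc, hcne, x e, hxe, x d, hxd, S, hS, hSlen ▸ Nat.Odd.sub_even hed.le hd he,
    fun z hz => ?_, fun z hz y hzy => ?_⟩
  · obtain ⟨m, ⟨hm1, hm2⟩, rfl⟩ := (hSsupp z).mp hz
    rcases hm1.eq_or_lt with rfl | hem
    · exact Or.inl rfl
    rcases hm2.eq_or_lt with rfl | hmd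
    · exact Or.inr (Or.inl rfl)
    exact Or.inr (Or.inr (hinner m hem hmd))
  · obtain ⟨m, ⟨hm1, hm2⟩, rfl⟩ := (hSsupp _).mp hz
    have hxm := M.edge_vert hzy
    have hem : e < m := hm1.lt_of_ne (by rintro rfl; exact hcov.not_mem_verts c₁ hc₁ _ hxe hxm)
    have hmd : m < d := hm2.lt_of_ne (by rintro rfl; exact hcov.not_mem_verts c hc _ hxd hxm)
    rw [hSsupp]
    rcases Nat.even_or_odd m with hev | hodd
    · have hadj := hNAdj (m - 1) (by omega) (by grind)
      rw [Nat.sub_add_cancel (by omega)] at hadj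
      exact ⟨m - 1, ⟨by omega, by omega⟩, hN.eq_of_adj_left hadj.symm (hMN.2 hzy)⟩
    · exact ⟨m + 1, ⟨by omega, by omega⟩,
        hN.eq_of_adj_left (hNAdj m (by omega) hodd) (hMN.2 hzy)⟩

open Classical in
theorem deleteVerts_sup_sdiff (hcov : IsOddCycleCover M s) {t : Finset (Σ u : V, G.Walk u u)}
    (hts : t ⊆ s) {X : Set V} (hX : ∀ z ∈ X, z ∈ M.verts ∨ ∃ c ∈ t, z ∈ c.2.support)
    (hXM : ∀ z ∈ X, ∀ y, M.Adj z y → y ∈ X) {M' : G.Subgraph} (hM' : M'.IsMatching)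
    (hM'v : ∀ z, z ∈ M'.verts ↔ z ∈ X ∨ ∃ c ∈ t, z ∈ c.2.support) :
    IsOddCycleCover (M.deleteVerts X ⊔ M') (s \ t) := by
  refine ⟨(hcov.isMatching.deleteVerts hXM).sup_of_disjoint_verts hM' ?_,
    fun c hc => hcov.isCycle c (Finset.mem_sdiff.1 hc).1,
    fun c hc => hcov.odd_length c (Finset.mem_sdiff.1 hc).1,
    fun c hc c' hc' => hcov.disjoint c (Finset.mem_sdiff.1 hc).1 c' (Finset.mem_sdiff.1 hc').1,
    fun c hc z hz hz' => ?_, fun z => ?_⟩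
  · refine Set.disjoint_left.mpr fun z ⟨hzM, hzX⟩ hz' => ?_
    obtain ⟨c, hc, hzc⟩ := ((hM'v z).1 hz').resolve_left hzX
    exact hcov.not_mem_verts c (hts hc) z hzc hzM
  · rw [Finset.mem_sdiff] at hc
    have hzM := hcov.not_mem_verts c hc.1 z hz
    rcases hz' with ⟨hzM', -⟩ | hz'
    · exact hzM hzM'
    obtain ⟨c', hc', hzc'⟩ : ∃ c' ∈ t, z ∈ c'.2.support :=
      ((hM'v z).1 hz').elim (fun hzX => (hX z hzX).resolve_left hzM) id
    exact hc.2 (hcov.eq_of_mem_support hc.1 (hts hc') hz hzc' ▸ hc')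
  · rcases hcov.cover z with hzM | ⟨c, hc, hzc⟩
    · by_cases hzX : z ∈ X
      · exact Or.inl (Or.inr ((hM'v z).2 (Or.inl hzX)))
      · exact Or.inl (Or.inl ⟨hzM, hzX⟩)
    · by_cases hct : c ∈ t
      · exact Or.inl (Or.inr ((hM'v z).2 (Or.inr ⟨c, hct, hzc⟩)))
      · exact Or.inr ⟨c, Finset.mem_sdiff.2 ⟨hc, hct⟩, hzc⟩

end IsOddCycleCover

theorem hasOddCycleCover_iff : HasOddCycleCover G ↔
    ∃ (M : G.Subgraph) (s : Finset (Σ u : V, G.Walk u u)), s.Nonempty ∧ IsOddCycleCover M s := by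
  classical
  constructor
  · rintro ⟨M, k, u, C, hk, hM, hC, hCC, hCM, hcov⟩
    refine ⟨M, Finset.univ.image fun i => ⟨u i, C i⟩,
      ⟨_, Finset.mem_image_of_mem _ (Finset.mem_univ ⟨0, hk⟩)⟩, hM, ?_, ?_, ?_, ?_, fun x => ?_⟩
    all_goals simp only [Finset.forall_mem_image, Finset.exists_mem_image, Finset.mem_univ,
      true_implies, true_and]
    · exact fun i => (hC i).1
    · exact fun i => (hC i).2
    · exact fun i j hne => hCC i j fun hij => hne (hij ▸ rfl)
    · exact hCM
    · exact hcov x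
  · rintro ⟨M, s, hs, hcov⟩
    obtain ⟨e⟩ : Nonempty (Fin s.card ≃ s) := ⟨s.equivFin.symm⟩
    refine ⟨M, s.card, fun i => (e i).1.1, fun i => (e i).1.2, hs.card_pos, hcov.isMatching,
      fun i => ⟨hcov.isCycle _ (e i).2, hcov.odd_length _ (e i).2⟩,
      fun i j hij => hcov.disjoint _ (e i).2 _ (e j).2 fun h => hij (e.injective (Subtype.ext h)),
      fun i => hcov.not_mem_verts _ (e i).2, fun x => ?_⟩
    obtain hx | ⟨c, hc, hxc⟩ := hcov.cover x
    · exact Or.inl hx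
    · refine Or.inr ⟨e.symm ⟨c, hc⟩, ?_⟩
      show x ∈ (e (e.symm ⟨c, hc⟩)).1.2.support
      rwa [e.apply_symm_apply]

/-- The walks `C₁`, `C₂`, `P` of an even subdivision of `T`, without the requirement that they
span the whole graph. -/
structure IsEvenSubdivTWalks {v w : V} (C₁ : G.Walk v v) (C₂ : G.Walk w w) (P : G.Walk v w) :
    Prop where
  isCycle₁ : C₁.IsCycle
  isCycle₂ : C₂.IsCycle
  odd_length₁ : Odd C₁.length
  odd_length₂ : Odd C₂.length
  isPath : P.IsPath
  odd_length : Odd P.length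
  disjoint : ∀ x ∈ C₁.support, x ∉ C₂.support
  eq_of_mem₁ : ∀ x ∈ P.support, x ∈ C₁.support → x = v
  eq_of_mem₂ : ∀ x ∈ P.support, x ∈ C₂.support → x = w

theorem isEvenSubdivT_iff : IsEvenSubdivT G ↔ ∃ (v w : V) (C₁ : G.Walk v v) (C₂ : G.Walk w w)
    (P : G.Walk v w), IsEvenSubdivTWalks C₁ C₂ P ∧
      (∀ x, x ∈ C₁.support ∨ x ∈ C₂.support ∨ x ∈ P.support) ∧
      ∀ e, e ∈ G.edgeSet ↔ e ∈ C₁.edges ∨ e ∈ C₂.edges ∨ e ∈ P.edges := by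
  constructor
  · rintro ⟨v, w, C₁, C₂, P, h1, h2, h3, h4, h5, h6, h7, h8, h9, hV, hE⟩
    exact ⟨v, w, C₁, C₂, P, ⟨h1, h2, h3, h4, h5, h6, h7, h8, h9⟩, hV, hE⟩
  · rintro ⟨v, w, C₁, C₂, P, ⟨h1, h2, h3, h4, h5, h6, h7, h8, h9⟩, hV, hE⟩
    exact ⟨v, w, C₁, C₂, P, h1, h2, h3, h4, h5, h6, h7, h8, h9, hV, hE⟩

namespace IsEvenSubdivTWalks

variable {v w : V} {C₁ : G.Walk v v} {C₂ : G.Walk w w} {P : G.Walk v w}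

theorem map_iff {W : Type*} {G' : SimpleGraph W} (f : G →g G') (hf : Function.Injective f) :
    IsEvenSubdivTWalks (C₁.map f) (C₂.map f) (P.map f) ↔ IsEvenSubdivTWalks C₁ C₂ P := by
  have hsupp : ∀ {a b : V} (p : G.Walk a b) (y : V), f y ∈ (p.map f).support ↔ y ∈ p.support :=
    fun p y => by rw [Walk.support_map, List.mem_map_of_injective hf]
  constructor
  · rintro ⟨h1, h2, h3, h4, h5, h6, h7, h8, h9⟩
    refine ⟨h1.of_map, h2.of_map, by simpa using h3, by simpa using h4, h5.of_map,
      by simpa using h6, fun x hx hx' => h7 _ ((hsupp _ _).2 hx) ((hsupp _ _).2 hx'),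
      fun x hx hx' => hf (h8 _ ((hsupp _ _).2 hx) ((hsupp _ _).2 hx')),
      fun x hx hx' => hf (h9 _ ((hsupp _ _).2 hx) ((hsupp _ _).2 hx'))⟩
  · rintro ⟨h1, h2, h3, h4, h5, h6, h7, h8, h9⟩
    have hmem : ∀ {a b : V} {p : G.Walk a b} {z : W}, z ∈ (p.map f).support →
        ∃ y ∈ p.support, f y = z := fun hz => by rwa [Walk.support_map, List.mem_map] at hz
    refine ⟨h1.map hf, h2.map hf, by simpa using h3, by simpa using h4, h5.map hf,
      by simpa using h6, fun z hz hz' => ?_, fun z hz hz' => ?_, fun z hz hz' => ?_⟩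
    all_goals obtain ⟨y, hy, rfl⟩ := hmem hz
    · exact h7 y hy ((hsupp _ _).1 hz')
    · rw [h8 y hy ((hsupp _ _).1 hz')]
    · rw [h9 y hy ((hsupp _ _).1 hz')]

theorem isEvenSubdivT_coe (h : IsEvenSubdivTWalks C₁ C₂ P) :
    IsEvenSubdivT (C₁.toSubgraph ⊔ C₂.toSubgraph ⊔ P.toSubgraph).coe := by
  set H := C₁.toSubgraph ⊔ C₂.toSubgraph ⊔ P.toSubgraph
  obtain ⟨q₁, hq₁⟩ := C₁.exists_map_hom_eq (H := H) (le_sup_left.trans le_sup_left)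
  obtain ⟨q₂, hq₂⟩ := C₂.exists_map_hom_eq (H := H) (le_sup_right.trans le_sup_left)
  obtain ⟨qP, hqP⟩ := P.exists_map_hom_eq (H := H) le_sup_right
  have hedges : ∀ {a b : H.verts} (q : H.coe.Walk a b) (e : Sym2 H.verts),
      e.map Subtype.val ∈ (q.map H.hom).edges ↔ e ∈ q.edges := fun q e => by
    rw [Walk.edges_map]
    exact List.mem_map_of_injective (Sym2.map.injective Subtype.val_injective)
  refine isEvenSubdivT_iff.mpr ⟨_, _, q₁, q₂, qP,
    (map_iff H.hom Subgraph.hom_injective).mp (by rwa [hq₁, hq₂, hqP]), fun z => ?_, fun e => ?_⟩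
  · have hz := z.2
    simp only [H, Subgraph.verts_sup, Walk.verts_toSubgraph, Set.mem_union, Set.mem_ofPred_eq]
      at hz
    rwa [← Subgraph.mem_support_map_hom, ← Subgraph.mem_support_map_hom,
      ← Subgraph.mem_support_map_hom, hq₁, hq₂, hqP, ← or_assoc]
  · rw [← hedges, ← hedges, ← hedges, hq₁, hq₂, hqP]
    induction e using Sym2.ind with
    | _ x y =>
    simp only [Sym2.map_mk, mem_edgeSet, Subgraph.coe_adj, H, Subgraph.sup_adj,
      Walk.adj_toSubgraph_iff_mem_edges, or_assoc]
    rfl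

theorem exists_isMatching (h : IsEvenSubdivTWalks C₁ C₂ P) :
    ∃ M : G.Subgraph, M.IsMatching ∧
      ∀ z, z ∈ M.verts ↔ z ∈ C₁.support ∨ z ∈ C₂.support ∨ z ∈ P.support := by
  obtain ⟨MP, hMP, hMPv⟩ := h.isPath.exists_isMatching_of_odd h.odd_length
  obtain ⟨M₁, hM₁, hM₁v⟩ := h.isCycle₁.exists_isMatching_of_odd h.odd_length₁
  obtain ⟨M₂, hM₂, hM₂v⟩ := h.isCycle₂.exists_isMatching_of_odd h.odd_length₂
  refine ⟨MP ⊔ M₁ ⊔ M₂, (hMP.sup_of_disjoint_verts hM₁ ?_).sup_of_disjoint_verts hM₂ ?_,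
    fun z => ?_⟩
  · rw [hMPv, hM₁v, Set.disjoint_left]
    exact fun z hzP hz₁ => hz₁.2 (h.eq_of_mem₁ z hzP hz₁.1)
  · rw [Subgraph.verts_sup, hMPv, hM₁v, hM₂v, Set.disjoint_left]
    rintro z (hzP | hz₁) hz₂
    exacts [hz₂.2 (h.eq_of_mem₂ z hzP hz₂.1), h.disjoint z hz₁.1 hz₂.1]
  · simp only [Subgraph.verts_sup, hMPv, hM₁v, hM₂v, Set.mem_union, Set.mem_sdiff,
      Set.mem_ofPred_eq, Set.mem_singleton_iff]
    constructor
    · rintro ((hz | hz) | hz)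
      exacts [Or.inr (Or.inr hz), Or.inl hz.1, Or.inr (Or.inl hz.1)]
    · rintro (hz | hz | hz)
      · by_cases hzv : z = v
        · exact Or.inl (Or.inl (hzv ▸ P.start_mem_support))
        · exact Or.inl (Or.inr ⟨hz, hzv⟩)
      · by_cases hzw : z = w
        · exact Or.inl (Or.inl (hzw ▸ P.end_mem_support))
        · exact Or.inr ⟨hz, hzw⟩
      · exact Or.inl (Or.inl hz)

open Classical in
theorem isOddCycleCover (h : IsEvenSubdivTWalks C₁ C₂ P) {M : G.Subgraph} (hM : M.IsMatching)
    (hMv : ∀ z, z ∈ M.verts ↔ ¬(z ∈ C₁.support ∨ z ∈ C₂.support ∨ z ∈ P.support)) :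
    ∃ M' : G.Subgraph, IsOddCycleCover M' {⟨v, C₁⟩, ⟨w, C₂⟩} := by
  obtain ⟨MP, hMP, hMPv⟩ := h.isPath.exists_isMatching_inner_of_odd h.odd_length
  simp only [Set.ext_iff, Set.mem_sdiff, Set.mem_ofPred_eq, Set.mem_insert_iff,
    Set.mem_singleton_iff, not_or] at hMPv
  refine ⟨M ⊔ MP, ⟨hM.sup_of_disjoint_verts hMP ?_, ?_, ?_, ?_, ?_, fun z => ?_⟩⟩
  · exact Set.disjoint_left.mpr fun z hzM hzP =>
      (hMv z).1 hzM (Or.inr (Or.inr ((hMPv z).1 hzP).1))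
  all_goals simp only [Finset.mem_insert, Finset.mem_singleton, forall_eq_or_imp, forall_eq,
    exists_eq_or_imp, exists_eq_left, Subgraph.verts_sup, Set.mem_union, hMPv, ne_eq]
  · exact ⟨h.isCycle₁, h.isCycle₂⟩
  · exact ⟨h.odd_length₁, h.odd_length₂⟩
  · exact ⟨⟨fun h' => (h' trivial).elim, fun _ z hz hz' => h.disjoint z hz hz'⟩,
      fun _ z hz hz' => h.disjoint z hz' hz, fun h' => (h' trivial).elim⟩
  · refine ⟨fun z hz hzM => ?_, fun z hz hzM => ?_⟩
    · rcases hzM with hzM | ⟨hzP, hzv, -⟩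
      exacts [(hMv z).1 hzM (Or.inl hz), hzv (h.eq_of_mem₁ z hzP hz)]
    · rcases hzM with hzM | ⟨hzP, -, hzw⟩
      exacts [(hMv z).1 hzM (Or.inr (Or.inl hz)), hzw (h.eq_of_mem₂ z hzP hz)]
  · by_cases hH : z ∈ C₁.support ∨ z ∈ C₂.support ∨ z ∈ P.support
    · rcases hH with hz | hz | hz
      · exact Or.inr (Or.inl hz)
      · exact Or.inr (Or.inr hz)
      · by_cases hzv : z = v
        · exact Or.inr (Or.inl (hzv ▸ C₁.start_mem_support))
        by_cases hzw : z = w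
        · exact Or.inr (Or.inr (hzw ▸ C₂.start_mem_support))
        exact Or.inl (Or.inr ⟨hz, hzv, hzw⟩)
    · exact Or.inl (Or.inl ((hMv z).2 hH))

end IsEvenSubdivTWalks

theorem exists_isEvenSubdivTWalks_of_isEvenSubdivT_coe {H : G.Subgraph}
    (h : IsEvenSubdivT H.coe) :
    ∃ (v w : V) (C₁ : G.Walk v v) (C₂ : G.Walk w w) (P : G.Walk v w),
      IsEvenSubdivTWalks C₁ C₂ P ∧
        ∀ z, z ∈ H.verts ↔ z ∈ C₁.support ∨ z ∈ C₂.support ∨ z ∈ P.support := by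
  obtain ⟨v, w, q₁, q₂, qP, hT, hV, -⟩ := isEvenSubdivT_iff.mp h
  have hmem : ∀ {a b : H.verts} (q : H.coe.Walk a b) {z : V}, z ∈ (q.map H.hom).support →
      z ∈ H.verts := fun q z hz => by
    rw [Walk.support_map, List.mem_map] at hz
    obtain ⟨y, -, rfl⟩ := hz
    exact y.2
  refine ⟨_, _, q₁.map H.hom, q₂.map H.hom, qP.map H.hom,
    (IsEvenSubdivTWalks.map_iff H.hom Subgraph.hom_injective).mpr hT, fun z => ⟨fun hz => ?_, ?_⟩⟩
  · simpa only [← Subgraph.mem_support_map_hom] using hV ⟨z, hz⟩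
  · rintro (hz | hz | hz)
    exacts [hmem _ hz, hmem _ hz, hmem _ hz]

namespace IsOddCycleCover

variable {M : G.Subgraph} {s : Finset (Σ u : V, G.Walk u u)} {c₁ c₂ : Σ u : V, G.Walk u u}

theorem isEvenSubdivTWalks_rotate [DecidableEq V] (hcov : IsOddCycleCover M s) (hc₁ : c₁ ∈ s)
    (hc₂ : c₂ ∈ s) (hne : c₂ ≠ c₁) {a b : V} (ha : a ∈ c₁.2.support) (hb : b ∈ c₂.2.support)
    {S : G.Walk a b} (hS : S.IsPath) (hSodd : Odd S.length)
    (hSends : ∀ z ∈ S.support, z = a ∨ z = b ∨ z ∈ M.verts) :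
    IsEvenSubdivTWalks (c₁.2.rotate a ha) (c₂.2.rotate b hb) S := by
  refine ⟨(hcov.isCycle c₁ hc₁).rotate ha, (hcov.isCycle c₂ hc₂).rotate hb,
    by simpa using hcov.odd_length c₁ hc₁, by simpa using hcov.odd_length c₂ hc₂, hS, hSodd,
    ?_, fun z hzS hz => ?_, fun z hzS hz => ?_⟩
  all_goals simp only [Walk.mem_support_rotate_iff] at *
  · exact hcov.disjoint c₁ hc₁ c₂ hc₂ hne.symm
  · rcases hSends z hzS with rfl | rfl | hzM
    · rfl
    · exact (hne (hcov.eq_of_mem_support hc₂ hc₁ hb hz)).elim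
    · exact (hcov.not_mem_verts c₁ hc₁ z hz hzM).elim
  · rcases hSends z hzS with rfl | rfl | hzM
    · exact (hne (hcov.eq_of_mem_support hc₂ hc₁ hz ha)).elim
    · rfl
    · exact (hcov.not_mem_verts c₂ hc₂ z hz hzM).elim

theorem hasNiceEvenSubdivT [Finite V] {Mpm : G.Subgraph} (hMpm : Mpm.IsPerfectMatching)
    (hcov : IsOddCycleCover M s) (hs : s.Nonempty) : HasNiceEvenSubdivT G := by
  classical
  induction hn : s.card using Nat.strong_induction_on generalizing M s with
  | _ n ih =>
  obtain ⟨c₁, hc₁⟩ := hs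
  obtain ⟨c₂, hc₂, hne, a, ha, b, hb, S, hS, hSodd, hSends, hSM⟩ :=
    hcov.exists_odd_path_between_cycles hMpm hc₁
  have hT := hcov.isEvenSubdivTWalks_rotate hc₁ hc₂ hne ha hb hS hSodd hSends
  have hHv : ∀ z, z ∈ (c₁.2.rotate a ha).support ∨ z ∈ (c₂.2.rotate b hb).support ∨
      z ∈ S.support ↔ z ∈ S.support ∨ ∃ c ∈ ({c₁, c₂} : Finset _), z ∈ c.2.support := by
    simp only [Walk.mem_support_rotate_iff, Finset.mem_insert, Finset.mem_singleton,
      exists_eq_or_imp, exists_eq_left]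
    tauto
  by_cases hrest : ∃ c ∈ s, c ≠ c₁ ∧ c ≠ c₂
  · obtain ⟨c, hc, hc1, hc2⟩ := hrest
    obtain ⟨MH, hMH, hMHv⟩ := hT.exists_isMatching
    have hsub : {c₁, c₂} ⊆ s := Finset.insert_subset hc₁ (Finset.singleton_subset_iff.2 hc₂)
    refine ih _ (hn ▸ Finset.card_lt_card (Finset.sdiff_ssubset hsub (Finset.insert_nonempty _ _)))
      (hcov.deleteVerts_sup_sdiff hsub (X := {z | z ∈ S.support}) (fun z hz => ?_) hSM hMH
        fun z => (hMHv z).trans (hHv z)) ⟨c, ?_⟩ rfl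
    · rcases hSends z hz with rfl | rfl | hzM
      exacts [Or.inr ⟨c₁, by simp, ha⟩, Or.inr ⟨c₂, by simp, hb⟩, Or.inl hzM]
    · simp [hc, hc1, hc2]
  · have hs : s = {c₁, c₂} := by
      ext c
      simp only [Finset.mem_insert, Finset.mem_singleton]
      refine ⟨fun hc => ?_, by rintro (rfl | rfl) <;> assumption⟩
      by_contra h
      exact hrest ⟨c, hc, not_or.mp h⟩
    subst hs
    set H := (c₁.2.rotate a ha).toSubgraph ⊔ (c₂.2.rotate b hb).toSubgraph ⊔ S.toSubgraph
    suffices hverts : H.vertsᶜ = (M.deleteVerts {z | z ∈ S.support}).verts from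
      ⟨H, hT.isEvenSubdivT_coe, hverts ▸ (hcov.isMatching.deleteVerts hSM).hasPM_induce⟩
    ext z
    simp only [H, Set.mem_compl_iff, hcov.mem_deleteVerts_verts_iff, Set.mem_ofPred_eq, ← hHv,
      Subgraph.verts_sup, Walk.verts_toSubgraph, Set.mem_union, or_assoc]

end IsOddCycleCover

theorem hasOddCycleCover_of_hasNiceEvenSubdivT (h : HasNiceEvenSubdivT G) :
    HasOddCycleCover G := by
  classical
  obtain ⟨H, hH, hPM⟩ := h
  obtain ⟨v, w, C₁, C₂, P, hT, hHv⟩ := exists_isEvenSubdivTWalks_of_isEvenSubdivT_coe hH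
  obtain ⟨M, hM, hMv⟩ := exists_isMatching_verts_eq_of_hasPM_induce hPM
  obtain ⟨M', hcov⟩ := hT.isOddCycleCover hM fun z => by rw [hMv, Set.mem_compl_iff, hHv]
  exact hasOddCycleCover_iff.mpr ⟨M', _, Finset.insert_nonempty _ _, hcov⟩

end SimpleGraph

/-- A graph with a perfect matching is Egerváry iff it does not contain an even
subdivision of `T` as a nice subgraph. -/
theorem egervary_iff_no_niceEvenSubdivT {V : Type*} [Fintype V] (G : SimpleGraph V)
    (hPM : HasPM G) : IsEgervary G ↔ ¬ HasNiceEvenSubdivT G := by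
  obtain ⟨Mpm, hMpm⟩ := hPM
  refine not_congr ⟨fun hcover => ?_, hasOddCycleCover_of_hasNiceEvenSubdivT⟩
  obtain ⟨M, s, hs, hcov⟩ := hasOddCycleCover_iff.mp hcover
  exact hcov.hasNiceEvenSubdivT hMpm hs
end

section
/- Every weak wheel (a cycle C on at least 3 vertices, a hub vertex w not on C, and internally disjoint paths from each vertex of C to w meeting only at w) contains no two vertex-disjoint odd cycles. -/
open SimpleGraph

variable {V : Type*}

/-- A weak wheel: a cycle `C`, a hub `w` not on `C`, and paths from each vertex of `C`
to `w`, pairwise meeting only at `w` and internally disjoint from `C`, comprising all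
vertices and edges of `G`. -/
def IsWeakWheel {V : Type*} (G : SimpleGraph V) : Prop :=
  ∃ (v0 w : V) (C : G.Walk v0 v0) (P : ∀ x : V, x ∈ C.support → G.Walk x w),
    C.IsCycle ∧ w ∉ C.support ∧
    (∀ x hx, (P x hx).IsPath) ∧
    (∀ x hx y hy, x ≠ y → ∀ z : V, z ∈ (P x hx).support → z ∈ (P y hy).support → z = w) ∧
    (∀ x hx, ∀ z : V, z ∈ (P x hx).support → z ∈ C.support → z = x) ∧
    (∀ z : V, z ∈ C.support ∨ ∃ x hx, z ∈ (P x hx).support) ∧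
    (∀ e : Sym2 V, e ∈ G.edgeSet ↔ e ∈ C.edges ∨ ∃ x hx, e ∈ (P x hx).edges)

/-! Any two cycles of a weak wheel meet, whatever their parity. A vertex off the rim `C`
other than the hub has exactly two neighbours, both on its spoke, so a cycle through it runs
along the whole spoke and contains the hub and a rim vertex. Hence every cycle meets the rim,
while a cycle avoiding the hub lies on the rim. As a spoke has only one rim vertex, such a cycle
uses only edges of `C`, and then, all degrees in `C` being two, it contains all of `C`. -/

namespace SimpleGraph

variable {G : SimpleGraph V}

namespace Walk.IsCycle

variable {u v : V} {D : G.Walk u u}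

theorem neighborSet_toSubgraph_eq_of_subset (hD : D.IsCycle) (hv : v ∈ D.support) {s : Set V}
    (hs : D.toSubgraph.neighborSet v ⊆ s) (hfin : s.Finite) (hcard : s.ncard ≤ 2) :
    D.toSubgraph.neighborSet v = s :=
  Set.eq_of_subset_of_ncard_le hs (hD.ncard_neighborSet_toSubgraph_eq_two hv ▸ hcard) hfin

theorem support_subset_of_isPath (hD : D.IsCycle) {a b : V} {p : G.Walk a b} (hp : p.IsPath)
    (hdeg : ∀ j, 0 < j → j < p.length →
      G.neighborSet (p.getVert j) ⊆ p.toSubgraph.neighborSet (p.getVert j))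
    {i : ℕ} (hi₀ : 0 < i) (hi : i < p.length) (hiD : p.getVert i ∈ D.support) :
    p.support ⊆ D.support := by
  -- an internal vertex has degree two, so the cycle uses both of its edges
  have step : ∀ j, 0 < j → j < p.length → p.getVert j ∈ D.support →
      p.getVert (j - 1) ∈ D.support ∧ p.getVert (j + 1) ∈ D.support := by
    intro j hj₀ hj hjD
    have hnbr := hp.neighborSet_toSubgraph_internal hj₀.ne' hj
    have heq := hD.neighborSet_toSubgraph_eq_of_subset hjD
      ((D.toSubgraph.neighborSet_subset _).trans (hdeg j hj₀ hj))
      p.finite_neighborSet_toSubgraph (hp.ncard_neighborSet_toSubgraph_internal_eq_two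
        hj₀.ne' hj).le
    rw [hnbr] at heq
    have hmem : ∀ y ∈ D.toSubgraph.neighborSet (p.getVert j), y ∈ D.support :=
      fun y hy => D.mem_verts_toSubgraph.mp (D.toSubgraph.edge_vert hy.symm)
    exact ⟨hmem _ (heq ▸ by simp), hmem _ (heq ▸ by simp)⟩
  have up : ∀ k, i + k ≤ p.length → p.getVert (i + k) ∈ D.support := by
    intro k
    induction k with
    | zero => exact fun _ => hiD
    | succ k ih => exact fun hk => (step _ (by omega) (by omega) (ih (by omega))).2
  have down : ∀ k ≤ i, p.getVert (i - k) ∈ D.support := by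
    intro k
    induction k with
    | zero => exact fun _ => hiD
    | succ k ih =>
      intro hk
      have := (step _ (by omega) (by omega) (ih (by omega))).1
      rwa [show i - k - 1 = i - (k + 1) by omega] at this
  intro z hz
  obtain ⟨j, rfl, hj⟩ := mem_support_iff_exists_getVert.mp hz
  rcases le_or_gt i j with hij | hij
  · simpa [Nat.add_sub_cancel' hij] using up (j - i) (by omega)
  · simpa [Nat.sub_sub_self hij.le] using down (i - j) (by omega)

theorem support_subset_of_edges_subset (hD : D.IsCycle) {C : G.Walk v v} (hC : C.IsCycle)
    (hDC : D.edges ⊆ C.edges) : C.support ⊆ D.support := by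
  have hle : ∀ x, D.toSubgraph.neighborSet x ⊆ C.toSubgraph.neighborSet x :=
    fun x y hy => adj_toSubgraph_iff_mem_edges.mpr (hDC (adj_toSubgraph_iff_mem_edges.mp hy))
  have huC : u ∈ C.support :=
    C.mem_support_of_adj_toSubgraph (hle u (D.toSubgraph_adj_snd hD.not_nil))
  intro z hz
  by_contra hzD
  obtain ⟨q⟩ := C.toSubgraph_connected ⟨u, C.mem_verts_toSubgraph.mpr huC⟩
    ⟨z, C.mem_verts_toSubgraph.mpr hz⟩
  obtain ⟨d, -, hd₁, hd₂⟩ :=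
    q.exists_boundary_dart {x | x.1 ∈ D.support} D.start_mem_support hzD
  have heq := hD.neighborSet_toSubgraph_eq_of_subset hd₁ (hle _)
    C.finite_neighborSet_toSubgraph
    (hC.ncard_neighborSet_toSubgraph_eq_two (C.mem_verts_toSubgraph.mp d.fst.2)).le
  have hadj : d.snd.1 ∈ D.toSubgraph.neighborSet d.fst := by rw [heq]; exact d.adj
  exact hd₂ (D.mem_support_of_adj_toSubgraph hadj.symm)

end Walk.IsCycle

structure WeakWheel (G : SimpleGraph V) where
  {start hub : V}
  cycle : G.Walk start start
  spoke : ∀ x ∈ cycle.support, G.Walk x hub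
  isCycle : cycle.IsCycle
  isPath_spoke : ∀ x hx, (spoke x hx).IsPath
  eq_hub_of_mem_spoke : ∀ x hx y hy, x ≠ y → ∀ z,
    z ∈ (spoke x hx).support → z ∈ (spoke y hy).support → z = hub
  eq_of_mem_spoke_of_mem_cycle : ∀ x hx z,
    z ∈ (spoke x hx).support → z ∈ cycle.support → z = x
  mem_cycle_or_spoke : ∀ z, z ∈ cycle.support ∨ ∃ x hx, z ∈ (spoke x hx).support
  mem_cycle_or_spoke_of_mem_edgeSet : ∀ e ∈ G.edgeSet,
    e ∈ cycle.edges ∨ ∃ x hx, e ∈ (spoke x hx).edges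

namespace WeakWheel

section

variable (W : G.WeakWheel)

theorem mem_edges_spoke_of_adj {x : V} {hx : x ∈ W.cycle.support} {z y : V}
    (hz : z ∈ (W.spoke x hx).support) (hzC : z ∉ W.cycle.support) (hzw : z ≠ W.hub)
    (hzy : G.Adj z y) : s(z, y) ∈ (W.spoke x hx).edges := by
  rcases W.mem_cycle_or_spoke_of_mem_edgeSet s(z, y) hzy with hC | ⟨x', hx', he⟩
  · exact absurd (W.cycle.fst_mem_support_of_mem_edges hC) hzC
  · obtain rfl : x' = x := by
      by_contra hne
      exact hzw (W.eq_hub_of_mem_spoke x' hx' x hx hne z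
        ((W.spoke x' hx').fst_mem_support_of_mem_edges he) hz)
    exact he

theorem mem_edges_cycle_of_adj {a b : V} (hab : G.Adj a b) (ha : a ∈ W.cycle.support)
    (hb : b ∈ W.cycle.support) : s(a, b) ∈ W.cycle.edges := by
  refine (W.mem_cycle_or_spoke_of_mem_edgeSet _ hab).resolve_right ?_
  rintro ⟨x, hx, he⟩
  have hax := W.eq_of_mem_spoke_of_mem_cycle x hx a
    ((W.spoke x hx).fst_mem_support_of_mem_edges he) ha
  have hbx := W.eq_of_mem_spoke_of_mem_cycle x hx b
    ((W.spoke x hx).snd_mem_support_of_mem_edges he) hb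
  exact hab.ne (hax.trans hbx.symm)

theorem exists_spoke_subset_of_isCycle {u : V} {D : G.Walk u u} (hD : D.IsCycle) {z : V}
    (hzD : z ∈ D.support) (hzC : z ∉ W.cycle.support) (hzw : z ≠ W.hub) :
    ∃ x hx, (W.spoke x hx).support ⊆ D.support := by
  obtain ⟨x, hx, hz⟩ := (W.mem_cycle_or_spoke z).resolve_left hzC
  set p := W.spoke x hx
  have hp : p.IsPath := W.isPath_spoke x hx
  have internal : ∀ j, 0 < j → j < p.length →
      p.getVert j ∉ W.cycle.support ∧ p.getVert j ≠ W.hub := by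
    intro j hj₀ hj
    refine ⟨fun hjC => ?_, fun hjw => ?_⟩
    · have := W.eq_of_mem_spoke_of_mem_cycle x hx _ (p.getVert_mem_support j) hjC
      have := hp.getVert_injOn (by simp; omega) (by simp) (this.trans p.getVert_zero.symm)
      omega
    · have := hp.getVert_injOn (by simp; omega) (by simp) (hjw.trans p.getVert_length.symm)
      omega
  obtain ⟨i, rfl, hi⟩ := Walk.mem_support_iff_exists_getVert.mp hz
  have hi₀ : 0 < i := Nat.pos_of_ne_zero fun h => hzC (by simpa [h] using hx)
  have hi' : i < p.length := lt_of_le_of_ne hi fun h => hzw (by simp [h])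
  refine ⟨x, hx, hD.support_subset_of_isPath hp (fun j hj₀ hj y hy => ?_) hi₀ hi' hzD⟩
  exact Walk.adj_toSubgraph_iff_mem_edges.mpr (W.mem_edges_spoke_of_adj
    (p.getVert_mem_support j) (internal j hj₀ hj).1 (internal j hj₀ hj).2 hy)

theorem exists_mem_support_cycle_of_isCycle {u : V} {D : G.Walk u u} (hD : D.IsCycle) :
    ∃ z ∈ D.support, z ∈ W.cycle.support := by
  obtain ⟨z, hzD, hzw⟩ : ∃ z ∈ D.support, z ≠ W.hub := by
    by_cases hu : u = W.hub
    · exact ⟨D.snd, D.getVert_mem_support 1,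
        fun h => (D.adj_snd hD.not_nil).ne (hu.trans h.symm)⟩
    · exact ⟨u, D.start_mem_support, hu⟩
  by_cases hzC : z ∈ W.cycle.support
  · exact ⟨z, hzD, hzC⟩
  · obtain ⟨x, hx, hsub⟩ := W.exists_spoke_subset_of_isCycle hD hzD hzC hzw
    exact ⟨x, hsub (W.spoke x hx).start_mem_support, hx⟩

theorem support_cycle_subset_of_hub_notMem {u : V} {D : G.Walk u u} (hD : D.IsCycle)
    (hw : W.hub ∉ D.support) : W.cycle.support ⊆ D.support := by
  have hDC : D.support ⊆ W.cycle.support := by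
    intro z hzD
    by_contra hzC
    obtain ⟨x, hx, hsub⟩ :=
      W.exists_spoke_subset_of_isCycle hD hzD hzC fun h => hw (h ▸ hzD)
    exact hw (hsub (W.spoke x hx).end_mem_support)
  refine hD.support_subset_of_edges_subset W.isCycle fun e he => ?_
  induction e using Sym2.ind with
  | _ a b =>
    exact W.mem_edges_cycle_of_adj (D.adj_of_mem_edges he)
      (hDC (D.fst_mem_support_of_mem_edges he)) (hDC (D.snd_mem_support_of_mem_edges he))

end

theorem exists_mem_support_of_isCycle (W : G.WeakWheel) {u v : V} {D₁ : G.Walk u u}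
    {D₂ : G.Walk v v} (hD₁ : D₁.IsCycle) (hD₂ : D₂.IsCycle) :
    ∃ z ∈ D₁.support, z ∈ D₂.support := by
  by_cases hw₁ : W.hub ∈ D₁.support
  · by_cases hw₂ : W.hub ∈ D₂.support
    · exact ⟨W.hub, hw₁, hw₂⟩
    · obtain ⟨z, hz₁, hzC⟩ := W.exists_mem_support_cycle_of_isCycle hD₁
      exact ⟨z, hz₁, W.support_cycle_subset_of_hub_notMem hD₂ hw₂ hzC⟩
  · obtain ⟨z, hz₂, hzC⟩ := W.exists_mem_support_cycle_of_isCycle hD₂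
    exact ⟨z, W.support_cycle_subset_of_hub_notMem hD₁ hw₁ hzC, hz₂⟩

end WeakWheel

end SimpleGraph

/-- A weak wheel contains no two vertex-disjoint odd cycles. -/
theorem weakWheel_no_twoDisjointOddCycles {V : Type*} (G : SimpleGraph V)
    (h : IsWeakWheel G) : ¬ TwoDisjointOddCycles G := by
  obtain ⟨v0, w, C, P, hC, -, hP, hPP, hPC, hcov, hE⟩ := h
  let W : G.WeakWheel := ⟨C, P, hC, hP, hPP, hPC, hcov, fun e he => (hE e).mp he⟩
  rintro ⟨a, b, C1, C2, h1, h2, -, -, hdisj⟩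
  obtain ⟨z, hz1, hz2⟩ := W.exists_mem_support_of_isCycle h1 h2
  exact hdisj z hz1 hz2
end

section
/- If v and v' are twin vertices in a graph G, then G - v' is α-critical if and only if G is α-critical. -/
open SimpleGraph

variable {V : Type*}

section TwinHelpers

variable {W : Type*}

private lemma indep_nonempty' (G : SimpleGraph W) :
    {n | ∃ s : Set W, IsIndep G s ∧ s.ncard = n}.Nonempty :=
  ⟨0, ∅, fun x hx => absurd hx (Set.notMem_empty x), Set.ncard_empty _⟩

private lemma indep_bdd' [Finite W] (G : SimpleGraph W) :
    BddAbove {n | ∃ s : Set W, IsIndep G s ∧ s.ncard = n} := by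
  refine ⟨Nat.card W, ?_⟩
  rintro n ⟨s, -, rfl⟩
  exact (Set.ncard_le_ncard (Set.subset_univ s) Set.finite_univ).trans_eq (Set.ncard_univ W)

private lemma le_alpha' [Finite W] (G : SimpleGraph W) {s : Set W} (h : IsIndep G s) :
    s.ncard ≤ alphaNum G :=
  le_csSup (indep_bdd' G) ⟨s, h, rfl⟩

private lemma exists_max' [Finite W] (G : SimpleGraph W) :
    ∃ s : Set W, IsIndep G s ∧ s.ncard = alphaNum G :=
  Nat.sSup_mem (indep_nonempty' G) (indep_bdd' G)

private lemma alpha_le' [Finite W] (G : SimpleGraph W) {n : ℕ}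
    (h : ∀ s : Set W, IsIndep G s → s.ncard ≤ n) : alphaNum G ≤ n :=
  csSup_le (indep_nonempty' G) (by rintro m ⟨s, hs, rfl⟩; exact h s hs)

private lemma swap_indep' [Finite W] {G : SimpleGraph W} {v v' : W}
    (hvv' : G.Adj v v') (h : ∀ y, y ≠ v → y ≠ v' → G.Adj v y → G.Adj v' y)
    {I : Set W} (hI : IsIndep G I) :
    ∃ J : Set W, IsIndep G J ∧ v' ∉ J ∧ J.ncard = I.ncard := by
  by_cases hv' : v' ∈ I
  · have hv : v ∉ I := fun hv => hI v hv v' hv' hvv'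
    refine ⟨insert v (I \ {v'}), ?_, ?_, ?_⟩
    · intro x hx y hy hxy
      rcases hx with rfl | ⟨hxI, hxv'⟩
      · rcases hy with rfl | ⟨hyI, hyv'⟩
        · exact G.irrefl hxy
        · have hyv : y ≠ x := fun hh => hv (hh ▸ hyI)
          exact hI v' hv' y hyI (h y hyv (by simpa using hyv') hxy)
      · rcases hy with rfl | ⟨hyI, hyv'⟩
        · have hxv : x ≠ y := fun hh => hv (hh ▸ hxI)
          exact hI v' hv' x hxI (h x hxv (by simpa using hxv') hxy.symm)
        · exact hI x hxI y hyI hxy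
    · rintro (rfl | ⟨-, h2⟩)
      · exact hvv'.ne' rfl
      · exact h2 rfl
    · exact Set.ncard_exchange hv hv'
  · exact ⟨I, hI, hv', rfl⟩

private lemma image_indep' {G : SimpleGraph W} {A : Set W} {s : Set A}
    (hs : IsIndep (G.induce A) s) :
    IsIndep G (Subtype.val '' s) ∧ (Subtype.val '' s).ncard = s.ncard ∧
      Subtype.val '' s ⊆ A := by
  refine ⟨?_, Set.ncard_image_of_injective s Subtype.val_injective, ?_⟩
  · rintro x ⟨a, ha, rfl⟩ y ⟨b, hb, rfl⟩ hab
    exact hs a ha b hb (by simpa [comap_adj] using hab)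
  · rintro x ⟨a, ha, rfl⟩; exact a.2

private lemma alpha_induce' [Finite W] (K : SimpleGraph W) (v v' : W)
    (hvv' : K.Adj v v') (h : ∀ y, y ≠ v → y ≠ v' → K.Adj v y → K.Adj v' y) :
    alphaNum (K.induce ({v'}ᶜ : Set W)) = alphaNum K := by
  apply le_antisymm
  · apply alpha_le'
    intro s hs
    obtain ⟨h1, h2, -⟩ := image_indep' hs
    exact h2 ▸ le_alpha' K h1
  · obtain ⟨I, hI, hIcard⟩ := exists_max' K
    obtain ⟨J, hJ, hv'J, hJcard⟩ := swap_indep' hvv' h hI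
    have hsub : J ⊆ ({v'}ᶜ : Set W) := fun x hx => by
      simp only [Set.mem_compl_iff, Set.mem_singleton_iff]
      rintro rfl; exact hv'J hx
    set s : Set ↥({v'}ᶜ : Set W) := Subtype.val ⁻¹' J with hsdef
    have himg : Subtype.val '' s = J := by
      rw [hsdef, Subtype.image_preimage_coe]
      exact Set.inter_eq_right.mpr hsub
    have hsi : IsIndep (K.induce ({v'}ᶜ : Set W)) s := by
      intro x hx y hy hxy
      exact hJ x hx y hy (by simpa [comap_adj] using hxy)
    have h1 := le_alpha' _ hsi
    have hcard : s.ncard = J.ncard := by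
      rw [← himg, Set.ncard_image_of_injective s Subtype.val_injective]
    omega

private lemma induce_deleteEdges' (G : SimpleGraph W) (A : Set W) (a b : A) :
    (G.induce A).deleteEdges {s(a, b)} = (G.deleteEdges {s(a.1, b.1)}).induce A := by
  ext x y
  simp only [deleteEdges_adj, comap_adj, Function.Embedding.coe_subtype, Set.mem_singleton_iff,
    Sym2.eq_iff, Subtype.ext_iff]

private lemma induce_deleteEdges₂ (G : SimpleGraph W) (A : Set W) (a b : W)
    (ha : a ∈ A) (hb : b ∈ A) :
    (G.induce A).deleteEdges {s((⟨a, ha⟩ : A), ⟨b, hb⟩)} =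
      (G.deleteEdges {s(a, b)}).induce A :=
  induce_deleteEdges' G A ⟨a, ha⟩ ⟨b, hb⟩

private lemma alpha_deleteEdge_le' [Finite W] (K : SimpleGraph W) (a b : W) :
    alphaNum (K.deleteEdges {s(a, b)}) ≤ alphaNum K + 1 := by
  apply alpha_le'
  intro s hs
  by_cases ha : a ∈ s
  · have hind : IsIndep K (s \ {a}) := by
      intro x hx y hy hxy
      refine hs x hx.1 y hy.1 ?_
      rw [SimpleGraph.deleteEdges_adj]
      refine ⟨hxy, ?_⟩
      simp only [Set.mem_singleton_iff, Sym2.eq_iff, not_or]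
      constructor
      · rintro ⟨rfl, -⟩; exact hx.2 rfl
      · rintro ⟨-, rfl⟩; exact hy.2 rfl
    have h2 := le_alpha' K hind
    have h3 := Set.ncard_diff_singleton_add_one ha s.toFinite
    omega
  · have hind : IsIndep K s := by
      intro x hx y hy hxy
      refine hs x hx y hy ?_
      rw [SimpleGraph.deleteEdges_adj]
      refine ⟨hxy, ?_⟩
      simp only [Set.mem_singleton_iff, Sym2.eq_iff, not_or]
      constructor
      · rintro ⟨rfl, -⟩; exact ha hx
      · rintro ⟨-, rfl⟩; exact ha hy
    exact (le_alpha' K hind).trans (Nat.le_succ _)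

private lemma forward_edge' [Finite W] (G : SimpleGraph W) (v v' : W)
    (hadj : G.Adj v v')
    (htwin : ∀ x, x ≠ v → x ≠ v' → (G.Adj v x ↔ G.Adj v' x))
    (hcrit : AlphaCritical G)
    (a b : ↥({v'}ᶜ : Set W)) (hab : (G.induce ({v'}ᶜ : Set W)).Adj a b) :
    alphaNum ((G.induce ({v'}ᶜ : Set W)).deleteEdges {s(a, b)})
      = alphaNum (G.induce ({v'}ᶜ : Set W)) + 1 := by
  have haG : G.Adj a.1 b.1 := by simpa [comap_adj] using hab
  have hav' : a.1 ≠ v' := a.2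
  have hbv' : b.1 ≠ v' := b.2
  rw [induce_deleteEdges']
  have hKvv' : (G.deleteEdges {s(a.1, b.1)}).Adj v v' := by
    rw [SimpleGraph.deleteEdges_adj]
    refine ⟨hadj, ?_⟩
    simp only [Set.mem_singleton_iff, Sym2.eq_iff, not_or]
    exact ⟨fun h => hbv' h.2.symm, fun h => hav' h.2.symm⟩
  have hKh : ∀ y, y ≠ v → y ≠ v' → (G.deleteEdges {s(a.1, b.1)}).Adj v y →
      (G.deleteEdges {s(a.1, b.1)}).Adj v' y := by
    intro y hyv hyv' hKy
    rw [SimpleGraph.deleteEdges_adj] at hKy ⊢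
    refine ⟨(htwin y hyv hyv').1 hKy.1, ?_⟩
    simp only [Set.mem_singleton_iff, Sym2.eq_iff, not_or]
    exact ⟨fun h => hav' h.1.symm, fun h => hbv' h.1.symm⟩
  rw [alpha_induce' (G.deleteEdges {s(a.1, b.1)}) v v' hKvv' hKh,
      alpha_induce' G v v' hadj (fun y h1 h2 => (htwin y h1 h2).1)]
  exact hcrit s(a.1, b.1) ((SimpleGraph.mem_edgeSet _).mpr haG)

private lemma crit_witness' [Finite W] (G : SimpleGraph W) (v v' : W)
    (hadj : G.Adj v v')
    (htwin : ∀ x, x ≠ v → x ≠ v' → (G.Adj v x ↔ G.Adj v' x))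
    (hcrit : AlphaCritical (G.induce ({v'}ᶜ : Set W)))
    (x : W) (hxv : x ≠ v) (hxv' : x ≠ v') (hvx : G.Adj v x) :
    ∃ J : Set W, IsIndep (G.deleteEdges {s(v, x)}) J ∧ v' ∉ J ∧ v ∈ J ∧ x ∈ J ∧
      J.ncard = alphaNum G + 1 := by
  have hvA : v ∈ ({v'}ᶜ : Set W) := by simpa using hadj.ne
  have hxA : x ∈ ({v'}ᶜ : Set W) := by simpa using hxv'
  have hHab : (G.induce ({v'}ᶜ : Set W)).Adj ⟨v, hvA⟩ ⟨x, hxA⟩ := by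
    simpa [comap_adj] using hvx
  have h1 := hcrit s((⟨v, hvA⟩ : ↥({v'}ᶜ : Set W)), ⟨x, hxA⟩)
    ((SimpleGraph.mem_edgeSet _).mpr hHab)
  rw [induce_deleteEdges₂,
      alpha_induce' G v v' hadj (fun y h1 h2 => (htwin y h1 h2).1)] at h1
  obtain ⟨s, hs, hscard⟩ := exists_max' ((G.deleteEdges {s(v, x)}).induce ({v'}ᶜ : Set W))
  rw [h1] at hscard
  obtain ⟨hJi, hJc, hJsub⟩ := image_indep' hs
  refine ⟨Subtype.val '' s, hJi, fun h => (hJsub h) rfl, ?_, ?_, by omega⟩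
  · by_contra hv
    have hind : IsIndep G (Subtype.val '' s) := by
      intro p hp q hq hpq
      refine hJi p hp q hq ?_
      rw [SimpleGraph.deleteEdges_adj]
      refine ⟨hpq, ?_⟩
      simp only [Set.mem_singleton_iff, Sym2.eq_iff, not_or]
      exact ⟨fun h => hv (h.1 ▸ hp), fun h => hv (h.2 ▸ hq)⟩
    have := le_alpha' G hind
    omega
  · by_contra hx
    have hind : IsIndep G (Subtype.val '' s) := by
      intro p hp q hq hpq
      refine hJi p hp q hq ?_
      rw [SimpleGraph.deleteEdges_adj]
      refine ⟨hpq, ?_⟩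
      simp only [Set.mem_singleton_iff, Sym2.eq_iff, not_or]
      exact ⟨fun h => hx (h.2 ▸ hq), fun h => hx (h.1 ▸ hp)⟩
    have := le_alpha' G hind
    omega

private lemma backward_edge' [Finite W] (G : SimpleGraph W) (v v' : W)
    (hadj : G.Adj v v')
    (htwin : ∀ x, x ≠ v → x ≠ v' → (G.Adj v x ↔ G.Adj v' x))
    (hcrit : AlphaCritical (G.induce ({v'}ᶜ : Set W)))
    (a b : W) (hab : G.Adj a b) (hbv' : b ≠ v') :
    alphaNum (G.deleteEdges {s(a, b)}) = alphaNum G + 1 := by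
  refine le_antisymm (alpha_deleteEdge_le' G a b) ?_
  by_cases hav' : a = v'
  · rw [hav'] at hab
    rw [hav']
    clear hav' a
    by_cases hbv : b = v
    · rw [hbv] at hab hbv'
      rw [hbv]
      clear hbv hbv' b
      -- case (c): the deleted edge is s(v', v)
      by_cases hex : ∃ x, x ≠ v ∧ x ≠ v' ∧ G.Adj v x
      · obtain ⟨x, hxv, hxv', hvx⟩ := hex
        obtain ⟨J, hJi, hv'J, hvJ, hxJ, hJcard⟩ :=
          crit_witness' G v v' hadj htwin hcrit x hxv hxv' hvx
        have hind : IsIndep (G.deleteEdges {s(v', v)}) (insert v' (J \ {x})) := by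
          intro p hp q hq hpq
          rw [SimpleGraph.deleteEdges_adj] at hpq
          obtain ⟨hpq, hne_e⟩ := hpq
          rcases hp with hp | ⟨hpJ, hpx⟩
          · rcases hq with hq | ⟨hqJ, hqx⟩
            · rw [hp, hq] at hpq; exact G.irrefl hpq
            · rw [hp] at hpq hne_e
              have hqv : q ≠ v := fun h => hne_e (by simp [h])
              have hqv' : q ≠ v' := fun h => hv'J (h ▸ hqJ)
              have hGvq : G.Adj v q := (htwin q hqv hqv').2 hpq
              refine hJi v hvJ q hqJ ?_
              rw [SimpleGraph.deleteEdges_adj]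
              refine ⟨hGvq, ?_⟩
              simp only [Set.mem_singleton_iff, Sym2.eq_iff, not_or]
              exact ⟨fun h => hqx (by simp [h.2]), fun h => hxv h.1.symm⟩
          · rcases hq with hq | ⟨hqJ, hqx⟩
            · rw [hq] at hpq hne_e
              have hpv : p ≠ v := fun h => hne_e (by simp [h, Sym2.eq_swap])
              have hpv' : p ≠ v' := fun h => hv'J (h ▸ hpJ)
              have hGvp : G.Adj v p := (htwin p hpv hpv').2 hpq.symm
              refine hJi v hvJ p hpJ ?_
              rw [SimpleGraph.deleteEdges_adj]
              refine ⟨hGvp, ?_⟩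
              simp only [Set.mem_singleton_iff, Sym2.eq_iff, not_or]
              exact ⟨fun h => hpx (by simp [h.2]), fun h => hxv h.1.symm⟩
            · refine hJi p hpJ q hqJ ?_
              rw [SimpleGraph.deleteEdges_adj]
              refine ⟨hpq, ?_⟩
              simp only [Set.mem_singleton_iff, Sym2.eq_iff, not_or]
              exact ⟨fun h => hqx (by simp [h.2]), fun h => hpx (by simp [h.1])⟩
        have hcard : (insert v' (J \ {x})).ncard = J.ncard := Set.ncard_exchange hv'J hxJ
        have := le_alpha' _ hind
        omega
      · -- v has no neighbor besides v'
        obtain ⟨I, hI, hIcard⟩ := exists_max' G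
        obtain ⟨J, hJ, hv'J, hJcard⟩ :=
          swap_indep' hadj (fun y h1 h2 => (htwin y h1 h2).1) hI
        have hvJ : v ∈ J := by
          by_contra hv
          have hind : IsIndep G (insert v J) := by
            intro p hp q hq hpq
            rcases hp with hp | hpJ
            · rcases hq with hq | hqJ
              · rw [hp, hq] at hpq; exact G.irrefl hpq
              · rw [hp] at hpq
                exact hex ⟨q, fun h => hv (h ▸ hqJ), fun h => hv'J (h ▸ hqJ), hpq⟩
            · rcases hq with hq | hqJ
              · rw [hq] at hpq
                exact hex ⟨p, fun h => hv (h ▸ hpJ), fun h => hv'J (h ▸ hpJ), hpq.symm⟩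
              · exact hJ p hpJ q hqJ hpq
          have h1 := le_alpha' G hind
          rw [Set.ncard_insert_of_notMem hv J.toFinite] at h1
          omega
        have hind : IsIndep (G.deleteEdges {s(v', v)}) (insert v' J) := by
          intro p hp q hq hpq
          rw [SimpleGraph.deleteEdges_adj] at hpq
          obtain ⟨hpq, hne_e⟩ := hpq
          rcases hp with hp | hpJ
          · rcases hq with hq | hqJ
            · rw [hp, hq] at hpq; exact G.irrefl hpq
            · rw [hp] at hpq hne_e
              have hqv : q ≠ v := fun h => hne_e (by simp [h])
              have hqv' : q ≠ v' := fun h => hv'J (h ▸ hqJ)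
              exact hex ⟨q, hqv, hqv', (htwin q hqv hqv').2 hpq⟩
          · rcases hq with hq | hqJ
            · rw [hq] at hpq hne_e
              have hpv : p ≠ v := fun h => hne_e (by simp [h, Sym2.eq_swap])
              have hpv' : p ≠ v' := fun h => hv'J (h ▸ hpJ)
              exact hex ⟨p, hpv, hpv', (htwin p hpv hpv').2 hpq.symm⟩
            · exact hJ p hpJ q hqJ hpq
        have hcard := Set.ncard_insert_of_notMem hv'J J.toFinite
        have := le_alpha' _ hind
        omega
    · -- case (b): edge s(v', b), b ∉ {v, v'}
      have hvb : G.Adj v b := (htwin b hbv hbv').2 hab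
      obtain ⟨J, hJi, hv'J, hvJ, hxJ, hJcard⟩ :=
        crit_witness' G v v' hadj htwin hcrit b hbv hbv' hvb
      have hind : IsIndep (G.deleteEdges {s(v', b)}) (insert v' (J \ {v})) := by
        intro p hp q hq hpq
        rw [SimpleGraph.deleteEdges_adj] at hpq
        obtain ⟨hpq, hne_e⟩ := hpq
        rcases hp with hp | ⟨hpJ, hpv⟩
        · rcases hq with hq | ⟨hqJ, hqv⟩
          · rw [hp, hq] at hpq; exact G.irrefl hpq
          · rw [hp] at hpq hne_e
            have hqb : q ≠ b := fun h => hne_e (by simp [h])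
            have hqv2 : q ≠ v := fun h => hqv (by simp [h])
            have hqv' : q ≠ v' := fun h => hv'J (h ▸ hqJ)
            have hGvq : G.Adj v q := (htwin q hqv2 hqv').2 hpq
            refine hJi v hvJ q hqJ ?_
            rw [SimpleGraph.deleteEdges_adj]
            refine ⟨hGvq, ?_⟩
            simp only [Set.mem_singleton_iff, Sym2.eq_iff, not_or]
            exact ⟨fun h => hqb h.2, fun h => hbv h.1.symm⟩
        · rcases hq with hq | ⟨hqJ, hqv⟩
          · rw [hq] at hpq hne_e
            have hpb : p ≠ b := fun h => hne_e (by simp [h, Sym2.eq_swap])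
            have hpv2 : p ≠ v := fun h => hpv (by simp [h])
            have hpv' : p ≠ v' := fun h => hv'J (h ▸ hpJ)
            have hGvp : G.Adj v p := (htwin p hpv2 hpv').2 hpq.symm
            refine hJi v hvJ p hpJ ?_
            rw [SimpleGraph.deleteEdges_adj]
            refine ⟨hGvp, ?_⟩
            simp only [Set.mem_singleton_iff, Sym2.eq_iff, not_or]
            exact ⟨fun h => hpb h.2, fun h => hbv h.1.symm⟩
          · refine hJi p hpJ q hqJ ?_
            rw [SimpleGraph.deleteEdges_adj]
            refine ⟨hpq, ?_⟩
            simp only [Set.mem_singleton_iff, Sym2.eq_iff, not_or]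
            exact ⟨fun h => hpv (by simp [h.1]), fun h => hqv (by simp [h.2])⟩
      have hcard : (insert v' (J \ {v})).ncard = J.ncard := Set.ncard_exchange hv'J hvJ
      have := le_alpha' _ hind
      omega
  · -- case (a): a ≠ v', b ≠ v'
    have haA : a ∈ ({v'}ᶜ : Set W) := by simpa using hav'
    have hbA : b ∈ ({v'}ᶜ : Set W) := by simpa using hbv'
    have hHab : (G.induce ({v'}ᶜ : Set W)).Adj ⟨a, haA⟩ ⟨b, hbA⟩ := by
      simpa [comap_adj] using hab
    have h1 := hcrit s((⟨a, haA⟩ : ↥({v'}ᶜ : Set W)), ⟨b, hbA⟩)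
      ((SimpleGraph.mem_edgeSet _).mpr hHab)
    rw [induce_deleteEdges₂,
        alpha_induce' G v v' hadj (fun y hy1 hy2 => (htwin y hy1 hy2).1)] at h1
    have hKvv' : (G.deleteEdges {s(a, b)}).Adj v v' := by
      rw [SimpleGraph.deleteEdges_adj]
      refine ⟨hadj, ?_⟩
      simp only [Set.mem_singleton_iff, Sym2.eq_iff, not_or]
      exact ⟨fun h => hbv' h.2.symm, fun h => hav' h.2.symm⟩
    have hKh : ∀ y, y ≠ v → y ≠ v' → (G.deleteEdges {s(a, b)}).Adj v y →
        (G.deleteEdges {s(a, b)}).Adj v' y := by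
      intro y hyv hyv' hKy
      rw [SimpleGraph.deleteEdges_adj] at hKy ⊢
      refine ⟨(htwin y hyv hyv').1 hKy.1, ?_⟩
      simp only [Set.mem_singleton_iff, Sym2.eq_iff, not_or]
      exact ⟨fun h => hav' h.1.symm, fun h => hbv' h.1.symm⟩
    rw [alpha_induce' (G.deleteEdges {s(a, b)}) v v' hKvv' hKh] at h1
    omega

end TwinHelpers

/-- If `v` and `v'` are twins in `G`, then `G - v'` is α-critical iff `G` is. -/
theorem twin_removal_alphaCritical {V : Type*} [Fintype V] (G : SimpleGraph V) (v v' : V)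
    (hne : v ≠ v') (hadj : G.Adj v v')
    (htwin : ∀ x : V, x ≠ v → x ≠ v' → (G.Adj v x ↔ G.Adj v' x)) :
    AlphaCritical (G.induce ({v'}ᶜ : Set V)) ↔ AlphaCritical G := by
  constructor
  · intro hcrit e
    induction e using Sym2.ind with
    | _ a b =>
      intro he
      rw [SimpleGraph.mem_edgeSet] at he
      by_cases hb : b = v'
      · rw [hb] at he ⊢
        have hav' : a ≠ v' := fun h => G.irrefl (h ▸ he)
        rw [Sym2.eq_swap]
        exact backward_edge' G v v' hadj htwin hcrit v' a he.symm hav'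
      · exact backward_edge' G v v' hadj htwin hcrit a b he hb
  · intro hcrit e
    induction e using Sym2.ind with
    | _ a b =>
      intro he
      rw [SimpleGraph.mem_edgeSet] at he
      exact forward_edge' G v v' hadj htwin hcrit a b he
end

section
/- If G is a connected α-critical graph, V1 and V2 partition the vertex set of G, and α(G) = α(G[V1]) + α(G[V2]), then V1 or V2 is empty. -/
open SimpleGraph

variable {V : Type*}

section Aux

lemma indep_bddAbove [Finite V] (G : SimpleGraph V) :
    BddAbove {n | ∃ s : Set V, IsIndep G s ∧ s.ncard = n} := by
  refine ⟨Nat.card V, fun n hn => ?_⟩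
  obtain ⟨s, _, rfl⟩ := hn
  calc s.ncard ≤ (Set.univ : Set V).ncard :=
        Set.ncard_le_ncard (Set.subset_univ s) Set.finite_univ
    _ = Nat.card V := Set.ncard_univ V

lemma alphaNum_spec [Finite V] (G : SimpleGraph V) :
    ∃ s : Set V, IsIndep G s ∧ s.ncard = alphaNum G := by
  have hne : Set.Nonempty {n | ∃ s : Set V, IsIndep G s ∧ s.ncard = n} :=
    ⟨0, ∅, fun x hx => absurd hx (Set.notMem_empty x), Set.ncard_empty V⟩
  exact Nat.sSup_mem hne (indep_bddAbove G)

lemma le_alphaNum [Finite V] (G : SimpleGraph V) {s : Set V} (hs : IsIndep G s) :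
    s.ncard ≤ alphaNum G :=
  le_csSup (indep_bddAbove G) ⟨s, hs, rfl⟩

lemma alphaNum_subadd [Finite V] (G : SimpleGraph V) (V1 V2 : Set V)
    (hunion : V1 ∪ V2 = Set.univ) :
    alphaNum G ≤ alphaNum (G.induce V1) + alphaNum (G.induce V2) := by
  obtain ⟨s, hs, hcard⟩ := alphaNum_spec G
  have key : ∀ W : Set V, (s ∩ W).ncard ≤ alphaNum (G.induce W) := by
    intro W
    set t : Set ↥W := Subtype.val ⁻¹' s with ht
    have htind : IsIndep (G.induce W) t := by
      intro x hx y hy hadj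
      exact hs x hx y hy hadj
    have himg : Subtype.val '' t = s ∩ W := by
      ext z; constructor
      · rintro ⟨⟨z, hzW⟩, hzs, rfl⟩; exact ⟨hzs, hzW⟩
      · rintro ⟨hzs, hzW⟩; exact ⟨⟨z, hzW⟩, hzs, rfl⟩
    have : (s ∩ W).ncard = t.ncard := by
      rw [← himg, Set.ncard_image_of_injective _ Subtype.val_injective]
    rw [this]
    exact le_alphaNum _ htind
  have hsub : s ⊆ (s ∩ V1) ∪ (s ∩ V2) := by
    intro x hx
    have : x ∈ V1 ∪ V2 := hunion ▸ Set.mem_univ x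
    rcases this with h | h
    · exact Or.inl ⟨hx, h⟩
    · exact Or.inr ⟨hx, h⟩
  calc alphaNum G = s.ncard := hcard.symm
    _ ≤ ((s ∩ V1) ∪ (s ∩ V2)).ncard :=
        Set.ncard_le_ncard hsub (Set.toFinite _)
    _ ≤ (s ∩ V1).ncard + (s ∩ V2).ncard := Set.ncard_union_le _ _
    _ ≤ alphaNum (G.induce V1) + alphaNum (G.induce V2) :=
        Nat.add_le_add (key V1) (key V2)

lemma walk_cross {G : SimpleGraph V} {S : Set V} :
    ∀ {a b : V}, G.Walk a b → a ∈ S → b ∉ S →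
      ∃ x ∈ S, ∃ y, y ∉ S ∧ G.Adj x y := by
  intro a b p
  induction p with
  | nil => intro ha hb; exact absurd ha hb
  | @cons u c w h q ih =>
    intro ha hb
    by_cases hc : c ∈ S
    · exact ih hc hb
    · exact ⟨u, ha, c, hc, h⟩

end Aux

/-- A connected α-critical graph admits no nontrivial independence-additive vertex
partition. -/
theorem alphaCritical_no_additive_partition {V : Type*} [Fintype V] (G : SimpleGraph V)
    (hconn : G.Connected) (hcrit : AlphaCritical G) (V1 V2 : Set V)
    (hdisj : Disjoint V1 V2) (hunion : V1 ∪ V2 = Set.univ)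
    (hadd : alphaNum G = alphaNum (G.induce V1) + alphaNum (G.induce V2)) :
    V1 = ∅ ∨ V2 = ∅ := by
  by_contra hcon
  push_neg at hcon
  obtain ⟨h1, h2⟩ := hcon
  obtain ⟨v1, hv1⟩ := h1
  obtain ⟨v2, hv2⟩ := h2
  obtain ⟨p⟩ := hconn v1 v2
  have hv2' : v2 ∉ V1 := fun h => hdisj.ne_of_mem h hv2 rfl
  obtain ⟨x, hx, y, hy, hadj⟩ := walk_cross p hv1 hv2'
  have hyV2 : y ∈ V2 := by
    have : y ∈ V1 ∪ V2 := hunion ▸ Set.mem_univ y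
    rcases this with h | h
    · exact absurd h hy
    · exact h
  have he : s(x, y) ∈ G.edgeSet := hadj
  have hne : ∀ (S : Set V), (x ∉ S ∨ y ∉ S) →
      (G.deleteEdges {s(x, y)}).induce S = G.induce S := by
    intro S hS
    ext a b
    simp only [comap_adj, Function.Embedding.coe_subtype, deleteEdges_adj,
      Set.mem_singleton_iff, and_iff_left_iff_imp]
    intro _ heq
    rw [Sym2.eq_iff] at heq
    rcases hS with hS | hS
    · rcases heq with ⟨ha, _⟩ | ⟨_, hb⟩
      · exact hS (ha ▸ a.2)
      · exact hS (hb ▸ b.2)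
    · rcases heq with ⟨_, hb⟩ | ⟨ha, _⟩
      · exact hS (hb ▸ b.2)
      · exact hS (ha ▸ a.2)
  have hxV2 : x ∉ V2 := fun h => hdisj.ne_of_mem hx h rfl
  have e1 := hne V1 (Or.inr hy)
  have e2 := hne V2 (Or.inl hxV2)
  have hsub := alphaNum_subadd (G.deleteEdges {s(x, y)}) V1 V2 hunion
  rw [e1, e2, ← hadd, hcrit _ he] at hsub
  omega
end

section
/- If G is a connected α-critical König-Egerváry graph with a perfect matching, then G is isomorphic to K_2. -/
open SimpleGraph

variable {V : Type*}

/-!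
A perfect matching `M` gives `ν = n / 2`, so the König-Egerváry condition gives `α = n / 2`.
An independent set contains at most one end of each edge of `M`, so deleting an edge outside `M`
leaves `α ≤ n / 2`; α-criticality therefore puts every edge of `G` in `M`. A connected graph in
which every vertex has exactly one neighbour is `K₂`.
-/

namespace SimpleGraph

variable {G : SimpleGraph V} {M : G.Subgraph}

open Finset in
lemma Subgraph.IsMatching.ncard_verts [Finite V] (hM : M.IsMatching) :
    M.verts.ncard = 2 * M.edgeSet.ncard := by
  classical
  have := Fintype.ofFinite V
  have hdeg : ∀ v : M.verts, M.coe.degree v = 1 := fun v => by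
    rw [M.coe_degree]
    convert isMatching_iff_forall_degree.1 hM v v.2
  calc M.verts.ncard = ∑ v : M.verts, M.coe.degree v := by
        simp [hdeg, Set.ncard_eq_toFinset_card']
    _ = 2 * #M.coe.edgeFinset := by convert M.coe.sum_degrees_eq_twice_card_edges
    _ = 2 * M.edgeSet.ncard := by
        rw [← M.image_coe_edgeSet_coe, Set.ncard_image_of_injective _
          (Sym2.map.injective Subtype.val_injective), Set.ncard_eq_toFinset_card']
        rfl

lemma Subgraph.IsPerfectMatching.nat_card_eq_two_mul [Finite V] (hM : M.IsPerfectMatching) :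
    Nat.card V = 2 * M.edgeSet.ncard := by
  rw [← Set.ncard_univ, ← hM.2.verts_eq_univ, hM.1.ncard_verts]

lemma Subgraph.IsPerfectMatching.matchNum_eq [Finite V] (hM : M.IsPerfectMatching) :
    matchNum G = M.edgeSet.ncard := by
  have hbound : ∀ k ∈ {n | ∃ N : G.Subgraph, N.IsMatching ∧ N.edgeSet.ncard = n},
      k ≤ M.edgeSet.ncard := by
    rintro _ ⟨N, hN, rfl⟩
    have hle : N.verts.ncard ≤ M.verts.ncard :=
      Set.ncard_le_ncard (hM.2.verts_eq_univ ▸ Set.subset_univ _)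
    rw [hN.ncard_verts, hM.1.ncard_verts] at hle
    omega
  exact le_antisymm (csSup_le ⟨_, M, hM.1, rfl⟩ hbound) (le_csSup ⟨_, hbound⟩ ⟨M, hM.1, rfl⟩)

lemma Subgraph.IsPerfectMatching.ncard_le_of_isIndep [Finite V] (hM : M.IsPerfectMatching)
    {s : Set V} (hs : IsIndep M.spanningCoe s) : s.ncard ≤ M.edgeSet.ncard := by
  choose mate hmate using fun v => (hM.1 (hM.2 v)).exists
  refine Set.ncard_le_ncard_of_injOn (fun v => s(v, mate v)) (fun v _ => hmate v) ?_
  intro x hx y hy hxy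
  rcases Sym2.eq_iff.1 hxy with ⟨hxy, -⟩ | ⟨-, hmate_x⟩
  · exact hxy
  · exact absurd (hmate_x ▸ hmate x) (hs x hx y hy)

lemma Subgraph.IsPerfectMatching.alphaNum_le [Finite V] (hM : M.IsPerfectMatching)
    {H : SimpleGraph V} (hMH : M.spanningCoe ≤ H) : alphaNum H ≤ M.edgeSet.ncard :=
  csSup_le ⟨0, ∅, by simp [IsIndep]⟩ <| by
    rintro _ ⟨s, hs, rfl⟩
    exact hM.ncard_le_of_isIndep fun x hx y hy hxy => hs x hx y hy (hMH hxy)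

lemma Subgraph.IsPerfectMatching.alphaNum_eq_of_isKE [Finite V] (hM : M.IsPerfectMatching)
    (hKE : IsKE G) : alphaNum G = M.edgeSet.ncard := by
  have h := hKE
  rw [IsKE, hM.matchNum_eq, hM.nat_card_eq_two_mul] at h
  omega

lemma AlphaCritical.edgeSet_subset_of_isKE [Finite V] (hcrit : AlphaCritical G) (hKE : IsKE G)
    (hM : M.IsPerfectMatching) : G.edgeSet ⊆ M.edgeSet := by
  intro e he
  by_contra heM
  have hle : alphaNum (G.deleteEdges {e}) ≤ M.edgeSet.ncard := by
    refine hM.alphaNum_le fun x y hxy => ?_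
    rw [Subgraph.spanningCoe_adj] at hxy
    refine (deleteEdges_adj ..).2 ⟨hxy.adj_sub, ?_⟩
    rintro rfl
    exact heM hxy
  rw [hcrit e he, hM.alphaNum_eq_of_isKE hKE] at hle
  omega

lemma Subgraph.IsPerfectMatching.existsUnique_adj_of_edgeSet_subset (hM : M.IsPerfectMatching)
    (hGM : G.edgeSet ⊆ M.edgeSet) (v : V) : ∃! w, G.Adj v w := by
  obtain ⟨w, hvw, huniq⟩ := hM.1 (hM.2 v)
  exact ⟨w, hvw.adj_sub, fun u hvu => huniq u (hGM (G.mem_edgeSet.2 hvu))⟩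

lemma Connected.nonempty_iso_top_fin_two (hconn : G.Connected) (h : ∀ v, ∃! w, G.Adj v w) :
    Nonempty (G ≃g (⊤ : SimpleGraph (Fin 2))) := by
  obtain ⟨a⟩ := hconn.nonempty
  obtain ⟨b, hab, -⟩ := h a
  have hclosed : ∀ x y, G.Adj x y → x ∈ ({a, b} : Set V) → y ∈ ({a, b} : Set V) := by
    rintro x y hxy (rfl | rfl)
    · exact Or.inr ((h x).unique hxy hab)
    · exact Or.inl ((h x).unique hxy hab.symm)
  have hmem : ∀ x, x ∈ ({a, b} : Set V) := fun x => by
    induction (reachable_iff_reflTransGen a x).1 (hconn a x) with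
    | refl => exact Or.inl rfl
    | tail _ hyz ih => exact hclosed _ _ hyz ih
  have hcard : Nat.card V = 2 := Nat.card_eq_two_iff.2 ⟨a, b, hab.ne, Set.eq_univ_of_forall hmem⟩
  have htop : G = ⊤ := by
    ext x y
    refine ⟨Adj.ne, fun hxy => ?_⟩
    rcases hmem x with rfl | rfl <;> rcases hmem y with rfl | rfl
    exacts [absurd rfl hxy, hab, hab.symm, absurd rfl hxy]
  have : Finite V := Nat.finite_of_card_ne_zero (by omega)
  subst htop
  exact ⟨Iso.completeGraph ((Finite.equivFin V).trans (finCongr hcard))⟩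

end SimpleGraph

/-- A connected α-critical König-Egerváry graph with a perfect matching is `K₂`. -/
theorem alphaCritical_KE_matchable_eq_K2 {V : Type*} [Fintype V] (G : SimpleGraph V)
    (hconn : G.Connected) (hcrit : AlphaCritical G) (hKE : IsKE G) (hPM : HasPM G) :
    Nonempty (G ≃g (⊤ : SimpleGraph (Fin 2))) := by
  obtain ⟨M, hM⟩ := hPM
  exact hconn.nonempty_iso_top_fin_two
    (hM.existsUnique_adj_of_edgeSet_subset (hcrit.edgeSet_subset_of_isKE hKE hM))
end
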